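/- arXiv:2405.07796 — 4 statements merged into one kernel-verified Lean document; each statement's English description precedes it below -/
import Mathlib

section
/- Let Ω ⊆ ℝⁿ be a bounded open set with smooth boundary and let κ : ℝⁿ×ℝⁿ → [0,1] be a measurable function with compact support. Then ∫∫_{ℝⁿ×ℝⁿ} (1_Ω(x) 1_{Ω^c}(y) / |x−y|ⁿ) κ(x,y) dx dy < ∞. -/
open MeasureTheory Filter Bornology
open scoped Topology ENNReal

noncomputable section

abbrev E (n : ℕ) := EuclideanSpace ℝ (Fin n)

def HasSmoothBoundary {n : ℕ} (Ω : Set (E n)) : Prop :=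
  ∃ w : E n → ℝ,
    ContDiff ℝ (⊤ : ℕ∞) w ∧
    Tendsto w (cocompact (E n)) atTop ∧
    Ω = {x | w x < 0} ∧
    ∀ x, w x = 0 → fderiv ℝ w x ≠ 0

section Auxiliary

open Metric Set

lemma coord_le_norm {n : ℕ} (x : E n) (k : Fin n) : |x k| ≤ ‖x‖ := by
  rw [EuclideanSpace.norm_eq x, show |x k| = Real.sqrt (‖x k‖ ^ 2) by
    rw [Real.sqrt_sq_eq_abs]; simp]
  apply Real.sqrt_le_sqrt
  exact Finset.single_le_sum (f := fun i => ‖x i‖ ^ 2) (fun i _ => sq_nonneg _) (Finset.mem_univ k)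

lemma exists_coord {n : ℕ} (L : E n →L[ℝ] ℝ) (hL : L ≠ 0) :
    ∃ i, L (EuclideanSpace.single i 1) ≠ 0 := by
  by_contra h
  push_neg at h
  apply hL
  ext x
  have : L.toLinearMap = (0 : E n →ₗ[ℝ] ℝ) := by
    apply Module.Basis.ext (EuclideanSpace.basisFun (Fin n) ℝ).toBasis
    intro i
    simpa using h i
  simpa using congrArg (fun (M : E n →ₗ[ℝ] ℝ) => M x) this

def Gmap {m : ℕ} (i : Fin (m + 1)) (q : ℝ × (Fin m → ℝ)) : E (m + 1) :=
  (MeasurableEquiv.toLp 2 (Fin (m + 1) → ℝ))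
    ((MeasurableEquiv.piFinSuccAbove (fun _ => ℝ) i).symm q)

lemma Gmap_mp {m : ℕ} (i : Fin (m + 1)) :
    MeasurePreserving (Gmap i) ((volume : Measure ℝ).prod (volume : Measure (Fin m → ℝ)))
      (volume : Measure (E (m + 1))) :=
  ((EuclideanSpace.volume_preserving_symm_measurableEquiv_toLp (Fin (m + 1))).symm
    (MeasurableEquiv.toLp 2 (Fin (m + 1) → ℝ)).symm).comp
    ((volume_preserving_piFinSuccAbove (fun _ => ℝ) i).symm
      (MeasurableEquiv.piFinSuccAbove (fun _ => ℝ) i))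

lemma Gmap_apply {m : ℕ} (i : Fin (m + 1)) (s : ℝ) (y : Fin m → ℝ) (k : Fin (m+1)) :
    Gmap i (s, y) k = Fin.insertNth (α := fun _ => ℝ) i s y k := by
  rfl

lemma Gmap_affine {m : ℕ} (i : Fin (m + 1)) (s : ℝ) (y : Fin m → ℝ) :
    Gmap i (s, y) = Gmap i (0, y) + s • EuclideanSpace.single i (1:ℝ) := by
  apply PiLp.ext
  intro k
  have h1 : (Gmap i (0, y) + s • EuclideanSpace.single i (1:ℝ)) k
      = Gmap i (0, y) k + s * (EuclideanSpace.single i (1:ℝ)) k := rfl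
  rw [h1, Gmap_apply, Gmap_apply]
  by_cases hk : k = i
  · subst hk; simp
  · obtain ⟨j, rfl⟩ := Fin.exists_succAbove_eq hk
    simp [EuclideanSpace.single_apply, (Fin.succAbove_ne i j)]


lemma Gmap_hasDerivAt {m : ℕ} (w : E (m+1) → ℝ) (hw : ContDiff ℝ (⊤ : ℕ∞) w)
    (i : Fin (m+1)) (y : Fin m → ℝ) (s : ℝ) :
    HasDerivAt (fun s => w (Gmap i (s, y)))
      (fderiv ℝ w (Gmap i (s, y)) (EuclideanSpace.single i 1)) s := by
  have hline : HasDerivAt (fun s : ℝ => Gmap i (s, y)) (EuclideanSpace.single i (1:ℝ)) s := by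
    have h : (fun s : ℝ => Gmap i (s, y))
        = fun s => Gmap i (0, y) + s • EuclideanSpace.single i (1:ℝ) :=
      funext fun s => Gmap_affine i s y
    rw [h]
    simpa using ((hasDerivAt_id s).smul_const (EuclideanSpace.single i (1:ℝ))).const_add
      (Gmap i (0, y))
  exact ((hw.differentiable (by simp) _).hasFDerivAt).comp_hasDerivAt s hline


lemma segment_mem_ball {m : ℕ} (i : Fin (m+1)) (y : Fin m → ℝ) {p : E (m+1)} {r : ℝ}
    {s₁ s₂ : ℝ} (h₁ : Gmap i (s₁, y) ∈ Metric.ball p r) (h₂ : Gmap i (s₂, y) ∈ Metric.ball p r)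
    {s : ℝ} (hs : s ∈ Set.Icc s₁ s₂) : Gmap i (s, y) ∈ Metric.ball p r := by
  rcases eq_or_lt_of_le (hs.1.trans hs.2 : s₁ ≤ s₂) with h | hlt
  · have : s = s₁ := le_antisymm (h ▸ hs.2) hs.1
    exact this ▸ h₁
  · set a := (s₂ - s) / (s₂ - s₁) with ha
    set b := (s - s₁) / (s₂ - s₁) with hb
    have hd : (0:ℝ) < s₂ - s₁ := by linarith
    have hab : a + b = 1 := by rw [ha, hb, ← add_div, div_eq_one_iff_eq hd.ne']; ring
    have key : a • Gmap i (s₁, y) + b • Gmap i (s₂, y) = Gmap i (s, y) := by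
      rw [Gmap_affine i s₁ y, Gmap_affine i s₂ y, Gmap_affine i s y]
      rw [smul_add, smul_add, smul_smul, smul_smul]
      have h1 : a • Gmap i (0, y) + b • Gmap i (0, y) = Gmap i (0, y) := by
        rw [← add_smul, hab, one_smul]
      have h2 : a * s₁ + b * s₂ = s := by rw [ha, hb]; field_simp; ring
      rw [add_add_add_comm, h1, ← add_smul, h2]
    rw [← key]
    exact (convex_ball p r) h₁ h₂ (div_nonneg (by linarith [hs.2]) hd.le) (div_nonneg (by linarith [hs.1]) hd.le) hab

lemma slice_bound {m : ℕ} (w : E (m+1) → ℝ) (hw : ContDiff ℝ (⊤ : ℕ∞) w)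
    (i : Fin (m+1)) {r c : ℝ} (hc : 0 < c) {p : E (m+1)}
    (hball : ∀ x ∈ Metric.ball p r, c ≤ fderiv ℝ w x (EuclideanSpace.single i 1))
    {t : ℝ} (y : Fin m → ℝ) {s₁ s₂ : ℝ} (hs : s₁ ≤ s₂)
    (hb₁ : Gmap i (s₁, y) ∈ Metric.ball p r) (ht₁ : |w (Gmap i (s₁, y))| ≤ t)
    (hb₂ : Gmap i (s₂, y) ∈ Metric.ball p r) (ht₂ : |w (Gmap i (s₂, y))| ≤ t) :
    s₂ - s₁ ≤ 2 * t / c := by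
  set φ : ℝ → ℝ := fun s => w (Gmap i (s, y)) with hφdef
  set ψ : ℝ → ℝ := fun s => φ s - s * c with hψdef
  have hφ : ∀ s, HasDerivAt φ (fderiv ℝ w (Gmap i (s, y)) (EuclideanSpace.single i 1)) s :=
    fun s => Gmap_hasDerivAt w hw i y s
  have hψd : ∀ s, HasDerivAt ψ (fderiv ℝ w (Gmap i (s, y)) (EuclideanSpace.single i 1) - c) s :=
    fun s => (hφ s).sub (hasDerivAt_mul_const c)
  have hmono : MonotoneOn ψ (Set.Icc s₁ s₂) := by
    apply monotoneOn_of_deriv_nonneg (convex_Icc s₁ s₂)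
    · exact (Differentiable.continuous (fun s => (hψd s).differentiableAt)).continuousOn
    · intro s hsi
      exact (hψd s).differentiableAt.differentiableWithinAt
    · intro s hsi
      rw [(hψd s).deriv]
      have : Gmap i (s, y) ∈ Metric.ball p r :=
        segment_mem_ball i y hb₁ hb₂ (interior_subset (s := Set.Icc s₁ s₂) hsi)
      linarith [hball _ this]
  have h12 : ψ s₁ ≤ ψ s₂ := hmono (Set.left_mem_Icc.2 hs) (Set.right_mem_Icc.2 hs) hs
  have : (s₂ - s₁) * c ≤ φ s₂ - φ s₁ := by simp only [hψdef] at h12; linarith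
  have habs : φ s₂ - φ s₁ ≤ 2 * t := by
    have := abs_le.1 ht₁; have := abs_le.1 ht₂
    simp only [hφdef]; linarith [abs_le.1 ht₁, abs_le.1 ht₂]
  rw [le_div_iff₀ hc]
  linarith


lemma key_local {m : ℕ} {w : E (m+1) → ℝ} (hw : ContDiff ℝ (⊤ : ℕ∞) w) {p : E (m+1)}
    (hp : fderiv ℝ w p ≠ 0) :
    ∃ r > 0, ∃ C : ℝ≥0∞, C ≠ ⊤ ∧ ∀ t : ℝ, 0 ≤ t →
      volume (Metric.ball p r ∩ {x | |w x| ≤ t}) ≤ ENNReal.ofReal t * C := by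
  obtain ⟨i, hi⟩ := exists_coord _ hp
  set v := EuclideanSpace.single i (1:ℝ) with hv
  have hcont : Continuous fun x => fderiv ℝ w x v :=
    (hw.continuous_fderiv (by simp)).clm_apply continuous_const
  set c := |fderiv ℝ w p v| / 2 with hcdef
  have hc : 0 < c := by
    have : 0 < |fderiv ℝ w p v| := abs_pos.2 hi
    positivity
  obtain ⟨r, hr, hsmall⟩ : ∃ r > 0, ∀ x ∈ Metric.ball p r,
      |fderiv ℝ w x v - fderiv ℝ w p v| < c := by
    obtain ⟨δ, hδ, hδ2⟩ := Metric.continuousAt_iff.1 (hcont.continuousAt (x := p)) c hc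
    exact ⟨δ, hδ, fun x hx => by simpa [Real.dist_eq] using hδ2 hx⟩
  -- uniform derivative bound with a sign
  have hsign : (∀ x ∈ Metric.ball p r, c ≤ fderiv ℝ w x v) ∨
      (∀ x ∈ Metric.ball p r, c ≤ fderiv ℝ (-w) x v) := by
    rcases abs_cases (fderiv ℝ w p v) with ⟨habs, hpos⟩ | ⟨habs, hneg⟩
    · left; intro x hx
      have := hsmall x hx
      have h2 := abs_lt.1 this
      simp only [hcdef, habs] at *
      linarith
    · right; intro x hx
      have h2 := abs_lt.1 (hsmall x hx)
      have hfx : fderiv ℝ (-w) x = -fderiv ℝ w x := by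
        rw [show (-w) = fun z => -(w z) from rfl, fderiv_fun_neg]
      rw [hfx]
      simp only [ContinuousLinearMap.neg_apply]
      simp only [hcdef, habs] at *
      linarith
  -- the slice estimate, valid in both cases
  have hSB : ∀ t : ℝ, ∀ y : Fin m → ℝ, ∀ s₁ s₂ : ℝ, s₁ ≤ s₂ →
      Gmap i (s₁, y) ∈ Metric.ball p r → |w (Gmap i (s₁, y))| ≤ t →
      Gmap i (s₂, y) ∈ Metric.ball p r → |w (Gmap i (s₂, y))| ≤ t →
      s₂ - s₁ ≤ 2 * t / c := by
    rcases hsign with h | h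
    · exact fun t y s₁ s₂ hs hb₁ ht₁ hb₂ ht₂ => slice_bound w hw i hc h y hs hb₁ ht₁ hb₂ ht₂
    · intro t y s₁ s₂ hs hb₁ ht₁ hb₂ ht₂
      have := slice_bound (-w) hw.neg i hc h y hs hb₁ (by simpa using ht₁) hb₂
        (by simpa using ht₂)
      simpa using this
  set p' : Fin m → ℝ := fun j => p (i.succAbove j) with hp'
  refine ⟨r, hr, ENNReal.ofReal (4 / c) * volume (Metric.closedBall p' r), ?_, ?_⟩
  · exact ENNReal.mul_ne_top ENNReal.ofReal_ne_top
      (isCompact_closedBall p' r).measure_lt_top.ne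
  intro t ht
  set S := Metric.ball p r ∩ {x | |w x| ≤ t} with hS
  have hSm : MeasurableSet S :=
    measurableSet_ball.inter ((measurableSet_le (hw.continuous.abs.measurable) measurable_const))
  have h1 : volume S = ((volume : Measure ℝ).prod (volume : Measure (Fin m → ℝ)))
      (Gmap i ⁻¹' S) := ((Gmap_mp i).measure_preimage hSm.nullMeasurableSet).symm
  rw [h1, Measure.prod_apply_symm ((Gmap_mp i).measurable hSm)]
  have hslice : ∀ y : Fin m → ℝ, (volume : Measure ℝ) ((fun s => (s, y)) ⁻¹' (Gmap i ⁻¹' S)) ≤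
      Set.indicator (Metric.closedBall p' r) (fun _ => ENNReal.ofReal (4 * t / c)) y := by
    intro y
    set T := (fun s => (s, y)) ⁻¹' (Gmap i ⁻¹' S) with hT
    rcases Set.eq_empty_or_nonempty T with hTe | ⟨s₀, hs₀⟩
    · simp [hTe]
    have hs₀' : Gmap i (s₀, y) ∈ Metric.ball p r ∧ |w (Gmap i (s₀, y))| ≤ t := hs₀
    have hymem : y ∈ Metric.closedBall p' r := by
      rw [Metric.mem_closedBall]
      rw [dist_pi_le_iff hr.le]
      intro j
      rw [Real.dist_eq]
      have h3 : y j - p' j = (Gmap i (s₀, y) - p) (i.succAbove j) := by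
        simp only [hp']
        rw [show (Gmap i (s₀, y) - p) (i.succAbove j) = Gmap i (s₀, y) (i.succAbove j)
          - p (i.succAbove j) from rfl, Gmap_apply]
        simp
      rw [h3]
      have := coord_le_norm (Gmap i (s₀, y) - p) (i.succAbove j)
      have h4 : ‖Gmap i (s₀, y) - p‖ < r := by
        rw [← dist_eq_norm]; exact hs₀'.1
      linarith
    rw [Set.indicator_of_mem hymem]
    have hsub : T ⊆ Set.Icc (s₀ - 2 * t / c) (s₀ + 2 * t / c) := by
      intro s hsT
      have hsT' : Gmap i (s, y) ∈ Metric.ball p r ∧ |w (Gmap i (s, y))| ≤ t := hsT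
      constructor
      · rcases le_total s₀ s with h | h
        · nlinarith [div_nonneg (by linarith : (0:ℝ) ≤ 2 * t) hc.le]
        · have := hSB t y s s₀ h hsT'.1 hsT'.2 hs₀'.1 hs₀'.2
          linarith
      · rcases le_total s s₀ with h | h
        · nlinarith [div_nonneg (by linarith : (0:ℝ) ≤ 2 * t) hc.le]
        · have := hSB t y s₀ s h hs₀'.1 hs₀'.2 hsT'.1 hsT'.2
          linarith
    calc (volume : Measure ℝ) T ≤ volume (Set.Icc (s₀ - 2 * t / c) (s₀ + 2 * t / c)) :=
          measure_mono hsub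
      _ = ENNReal.ofReal (4 * t / c) := by
          rw [Real.volume_Icc]; congr 1; ring
  calc ∫⁻ y, (volume : Measure ℝ) ((fun s => (s, y)) ⁻¹' (Gmap i ⁻¹' S)) ≤
      ∫⁻ y, Set.indicator (Metric.closedBall p' r) (fun _ => ENNReal.ofReal (4 * t / c)) y :=
        lintegral_mono hslice
    _ = ENNReal.ofReal (4 * t / c) * volume (Metric.closedBall p' r) :=
        lintegral_indicator_const measurableSet_closedBall _
    _ = ENNReal.ofReal t * (ENNReal.ofReal (4 / c) * volume (Metric.closedBall p' r)) := by
        rw [← mul_assoc, ← ENNReal.ofReal_mul ht]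
        congr 2
        ring


lemma band_bound {m : ℕ} {w : E (m+1) → ℝ} (hw : ContDiff ℝ (⊤ : ℕ∞) w)
    (hwc : Tendsto w (cocompact (E (m+1))) atTop)
    (hgrad : ∀ x, w x = 0 → fderiv ℝ w x ≠ 0) :
    ∃ C : ℝ≥0∞, C ≠ ⊤ ∧ ∃ t0 > 0, ∀ t : ℝ, 0 < t → t ≤ t0 →
      volume {x | -t ≤ w x ∧ w x < 0} ≤ ENNReal.ofReal t * C := by
  -- K0 compact
  obtain ⟨K, hKc, hK⟩ : ∃ K : Set (E (m+1)), IsCompact K ∧ ∀ x ∉ K, 1 ≤ w x := by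
    have h := hwc.eventually (eventually_ge_atTop (1:ℝ))
    rw [Filter.Eventually, Filter.mem_cocompact] at h
    obtain ⟨K, hKc, hK⟩ := h
    exact ⟨K, hKc, fun x hx => hK (by simpa using hx)⟩
  have hK0closed : IsClosed {x | w x ≤ 0} := isClosed_le hw.continuous continuous_const
  have hK0 : IsCompact {x | w x ≤ 0} := by
    apply hKc.of_isClosed_subset hK0closed
    intro x hx
    by_contra hxK
    have := hK x hxK
    simp only [mem_setOf_eq] at hx
    linarith
  have hZc : IsCompact {x | w x = 0} := by
    apply hK0.of_isClosed_subset (isClosed_eq hw.continuous continuous_const)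
    intro x hx; simp only [mem_setOf_eq] at *; linarith [hx.le]
  set Z := {x | w x = 0} with hZ
  have hkey : ∀ z : Z, ∃ r > 0, ∃ C : ℝ≥0∞, C ≠ ⊤ ∧ ∀ t : ℝ, 0 ≤ t →
      volume (Metric.ball (z:E (m+1)) r ∩ {x | |w x| ≤ t}) ≤ ENNReal.ofReal t * C :=
    fun z => key_local hw (hgrad z z.2)
  choose r hr C hC hbd using hkey
  obtain ⟨s, hs⟩ := hZc.elim_finite_subcover (fun z : Z => Metric.ball (z : E (m+1)) (r z))
    (fun z => isOpen_ball) (fun x hx => mem_iUnion.2 ⟨⟨x, hx⟩, mem_ball_self (hr _)⟩)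
  set U := ⋃ z ∈ s, Metric.ball (z : E (m+1)) (r z) with hU
  have hUopen : IsOpen U := isOpen_biUnion fun z _ => isOpen_ball
  have hZU : Z ⊆ U := by
    intro x hx
    obtain ⟨z, hz⟩ := mem_iUnion.1 (hs hx)
    obtain ⟨hzs, hxz⟩ := mem_iUnion.1 hz
    exact mem_biUnion hzs hxz
  -- find t0
  obtain ⟨t0, ht0, ht0p⟩ : ∃ t0 > 0, ∀ x, -t0 ≤ w x → w x < 0 → x ∈ U := by
    set K' := {x | w x ≤ 0} \ U with hK'
    have hK'c : IsCompact K' := hK0.diff hUopen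
    rcases K'.eq_empty_or_nonempty with he | hne
    · refine ⟨1, one_pos, fun x h1 h2 => ?_⟩
      by_contra hxU
      have : x ∈ K' := ⟨h2.le, hxU⟩
      rw [he] at this; exact this
    · obtain ⟨z0, hz0K, hz0max⟩ := hK'c.exists_isMaxOn hne (hw.continuous.continuousOn)
      have hz0neg : w z0 < 0 := by
        rcases lt_or_eq_of_le (show w z0 ≤ 0 from hz0K.1) with h | h
        · exact h
        · exact absurd (hZU (by simpa [hZ] using h)) hz0K.2
      refine ⟨-w z0 / 2, by linarith, fun x h1 h2 => ?_⟩
      by_contra hxU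
      have hmem : x ∈ K' := ⟨h2.le, hxU⟩
      have := hz0max hmem
      simp only [mem_setOf_eq] at this
      linarith
  refine ⟨∑ z ∈ s, C z, ?_, t0, ht0, fun t htpos ht => ?_⟩
  · rw [ENNReal.sum_ne_top]; exact fun z _ => hC z
  have hsub : {x | -t ≤ w x ∧ w x < 0} ⊆
      ⋃ z ∈ s, (Metric.ball (z : E (m+1)) (r z) ∩ {x | |w x| ≤ t}) := by
    intro x ⟨h1, h2⟩
    have hxU : x ∈ U := ht0p x (by linarith) h2
    obtain ⟨z, hz⟩ := mem_iUnion.1 hxU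
    obtain ⟨hzs, hxz⟩ := mem_iUnion.1 hz
    refine mem_biUnion hzs ⟨hxz, ?_⟩
    simp only [mem_setOf_eq, abs_le]
    exact ⟨h1, by linarith⟩
  calc volume {x | -t ≤ w x ∧ w x < 0} ≤
      ∑ z ∈ s, volume (Metric.ball (z : E (m+1)) (r z) ∩ {x | |w x| ≤ t}) :=
        (measure_mono hsub).trans (measure_biUnion_finset_le s _)
    _ ≤ ∑ z ∈ s, ENNReal.ofReal t * C z := Finset.sum_le_sum fun z _ => hbd z t htpos.le
    _ = ENNReal.ofReal t * ∑ z ∈ s, C z := by rw [Finset.mul_sum]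


lemma dist_band0 {m : ℕ} {Ω : Set (E (m+1))} (hΩb : IsBounded Ω)
    {w : E (m+1) → ℝ} (hw : ContDiff ℝ (⊤ : ℕ∞) w)
    (hwc : Tendsto w (cocompact (E (m+1))) atTop)
    (hΩw : Ω = {x | w x < 0})
    (hgrad : ∀ x, w x = 0 → fderiv ℝ w x ≠ 0) :
    ∃ C : ℝ≥0∞, C ≠ ⊤ ∧ ∃ s0 > 0, ∀ s : ℝ, 0 < s → s ≤ s0 →
      volume {x | x ∈ Ω ∧ Metric.infDist x Ωᶜ < s} ≤ ENNReal.ofReal s * C := by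
  -- complement nonempty
  have hcompl : Ωᶜ.Nonempty := by
    obtain ⟨x, hx⟩ := (hwc.eventually (eventually_ge_atTop (1:ℝ))).exists
    exact ⟨x, by rw [hΩw]; simp only [mem_compl_iff, mem_setOf_eq, not_lt]; linarith⟩
  obtain ⟨Cb, hCb, t0, ht0, hband⟩ := band_bound hw hwc hgrad
  -- Radius and Lipschitz bound
  obtain ⟨R0, hR0⟩ := hΩb.subset_closedBall 0
  set B := Metric.closedBall (0 : E (m+1)) (|R0| + 1) with hB
  have hBR : Ω ⊆ B := hR0.trans (Metric.closedBall_subset_closedBall (by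
    cases abs_cases R0 with
    | inl h => linarith [h.1]
    | inr h => linarith [h.1]))
  obtain ⟨M, hM⟩ := (isCompact_closedBall (0 : E (m+1)) (|R0| + 1)).exists_bound_of_continuousOn
    ((hw.continuous_fderiv (by simp)).continuousOn)
  set L : ℝ := max M 1 with hL
  have hL1 : (1:ℝ) ≤ L := le_max_right _ _
  have hL0 : (0:ℝ) < L := by linarith
  have hlip : LipschitzOnWith L.toNNReal w B := by
    apply Convex.lipschitzOnWith_of_nnnorm_fderiv_le
      (fun x _ => (hw.differentiable (by simp)).differentiableAt)
      (fun x hx => ?_) (convex_closedBall _ _)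
    rw [← Real.toNNReal_coe (r := ‖fderiv ℝ w x‖₊)]
    apply Real.toNNReal_mono
    exact (hM x hx).trans (le_max_left M 1)
  refine ⟨ENNReal.ofReal L * Cb, ENNReal.mul_ne_top ENNReal.ofReal_ne_top hCb,
    min 1 (t0 / L), lt_min one_pos (by positivity), fun s hs hs0 => ?_⟩
  have hs1 : s ≤ 1 := hs0.trans (min_le_left _ _)
  have hst0 : L * s ≤ t0 := by
    have h2 : s ≤ t0 / L := hs0.trans (min_le_right _ _)
    rw [← le_div_iff₀' hL0]
    exact h2
  have hsub : {x | x ∈ Ω ∧ Metric.infDist x Ωᶜ < s} ⊆ {x | -(L * s) ≤ w x ∧ w x < 0} := by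
    rintro x ⟨hxΩ, hxd⟩
    obtain ⟨y, hyΩc, hxy⟩ := (Metric.infDist_lt_iff hcompl).1 hxd
    have hwy : 0 ≤ w y := by
      rw [hΩw] at hyΩc; simpa using hyΩc
    have hxB : x ∈ B := hBR hxΩ
    have hyB : y ∈ B := by
      rw [hB, Metric.mem_closedBall]
      have h1 : dist x 0 ≤ R0 := hR0 hxΩ
      have h2 := dist_triangle y x (0 : E (m+1))
      rw [dist_comm y x] at h2
      have h3 : R0 ≤ |R0| := le_abs_self R0
      linarith
    have hdist := hlip.dist_le_mul x hxB y hyB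
    rw [Real.dist_eq] at hdist
    have habs := abs_le.1 hdist
    have hC : L.toNNReal = (L : ℝ) := Real.coe_toNNReal L hL0.le
    rw [hC] at hdist habs
    have hLs : L * dist x y ≤ L * s := by nlinarith [dist_nonneg (x := x) (y := y)]
    refine ⟨by linarith [habs.1], by rw [hΩw] at hxΩ; exact hxΩ⟩
  calc volume {x | x ∈ Ω ∧ Metric.infDist x Ωᶜ < s} ≤ volume {x | -(L*s) ≤ w x ∧ w x < 0} :=
        measure_mono hsub
    _ ≤ ENNReal.ofReal (L * s) * Cb := hband (L*s) (by positivity) hst0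
    _ = ENNReal.ofReal s * (ENNReal.ofReal L * Cb) := by
        rw [mul_comm L s, ENNReal.ofReal_mul hs.le, mul_assoc]


lemma ball_rpow_lintegral {n : ℕ} (hn : 1 ≤ n) {a : ℝ} (ha0 : 0 ≤ a) (han : a < n)
    {r : ℝ} (hr : 0 < r) :
    ∫⁻ z : E n in Metric.ball 0 r, ENNReal.ofReal (‖z‖ ^ (-a)) < ⊤ := by
  have : Nontrivial (E n) := by
    have : Nonempty (Fin n) := ⟨⟨0, hn⟩⟩
    infer_instance
  set c : ℕ → ℝ := fun k => r * (2:ℝ) ^ (-(k:ℝ)) with hc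
  have hcs : ∀ k : ℕ, c (k+1) = r * (2:ℝ) ^ (-((k:ℝ)+1)) := by
    intro k; simp only [hc]; push_cast; ring_nf
  have hcpos : ∀ k, 0 < c k := fun k => mul_pos hr (Real.rpow_pos_of_pos two_pos _)
  set A : ℕ → Set (E n) := fun k => {z | c (k+1) ≤ ‖z‖ ∧ ‖z‖ < c k} with hA
  have hAmeas : ∀ k, MeasurableSet (A k) := by
    intro k
    exact (measurableSet_le measurable_const continuous_norm.measurable).inter
      (measurableSet_lt continuous_norm.measurable measurable_const)
  have hcover : Metric.ball (0 : E n) r \ {0} ⊆ ⋃ k, A k := by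
    intro z hz
    have hz0 : (0:ℝ) < ‖z‖ := by
      simp only [mem_diff, mem_singleton_iff] at hz
      exact norm_pos_iff.2 hz.2
    have hzr : ‖z‖ < r := by
      have := hz.1
      rwa [mem_ball, dist_zero_right] at this
    have hex : ∃ k : ℕ, c (k+1) ≤ ‖z‖ := by
      obtain ⟨k, hk⟩ := pow_unbounded_of_one_lt (r / ‖z‖) one_lt_two
      refine ⟨k, ?_⟩
      rw [hcs k]
      have h3 : (2:ℝ) ^ (-((k:ℝ)+1)) ≤ ((2:ℝ)^k)⁻¹ := by
        rw [show ((2:ℝ)^k)⁻¹ = (2:ℝ) ^ (-(k:ℝ)) by rw [Real.rpow_neg two_pos.le,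
          Real.rpow_natCast]]
        apply Real.rpow_le_rpow_of_exponent_le one_le_two; linarith
      have h4 : r * ((2:ℝ)^k)⁻¹ ≤ ‖z‖ := by
        rw [div_lt_iff₀ hz0] at hk
        rw [mul_inv_le_iff₀ (by positivity)]
        nlinarith
      nlinarith [Real.rpow_pos_of_pos two_pos (-((k:ℝ)+1))]
    classical
    refine mem_iUnion.2 ⟨Nat.find hex, Nat.find_spec hex, ?_⟩
    rcases Nat.eq_zero_or_pos (Nat.find hex) with h0 | hpos
    · rw [h0]
      simpa [hc] using hzr
    · have h5 := Nat.find_min hex (m := Nat.find hex - 1) (by omega)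
      push_neg at h5
      have hk1 : Nat.find hex - 1 + 1 = Nat.find hex := by omega
      rw [hk1] at h5
      exact h5
  have key : ∀ k, ∫⁻ z : E n in A k, ENNReal.ofReal (‖z‖ ^ (-a))
      ≤ ENNReal.ofReal ((c (k+1)) ^ (-a)) * volume (Metric.ball (0:E n) (c k)) := by
    intro k
    calc ∫⁻ z : E n in A k, ENNReal.ofReal (‖z‖ ^ (-a))
        ≤ ∫⁻ _z : E n in A k, ENNReal.ofReal ((c (k+1)) ^ (-a)) := by
          apply setLIntegral_mono' (hAmeas k)
          intro z hz
          exact ENNReal.ofReal_le_ofReal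
            (Real.rpow_le_rpow_of_nonpos (hcpos (k+1)) hz.1 (by linarith))
      _ = ENNReal.ofReal ((c (k+1)) ^ (-a)) * volume (A k) := setLIntegral_const _ _
      _ ≤ _ := by
          apply mul_le_mul_right
          apply measure_mono
          intro z hz
          rw [mem_ball, dist_zero_right]
          exact hz.2
  -- compute the constant
  have hconst : ∀ k : ℕ, ENNReal.ofReal ((c (k+1)) ^ (-a)) * volume (Metric.ball (0:E n) (c k))
      = ENNReal.ofReal (r ^ ((n:ℝ) - a) * (2:ℝ)^a) * (ENNReal.ofReal ((2:ℝ)^(-((n:ℝ)-a))))^k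
        * volume (Metric.ball (0:E n) 1) := by
    intro k
    rw [Measure.addHaar_ball volume 0 (hcpos k).le, finrank_euclideanSpace_fin]
    rw [← mul_assoc]
    congr 1
    rw [← ENNReal.ofReal_pow (by positivity), ← ENNReal.ofReal_mul (by positivity),
      ← ENNReal.ofReal_mul (by positivity)]
    congr 1
    -- real computation
    rw [hcs k, show c k = r * (2:ℝ)^(-(k:ℝ)) from rfl]
    have h2 : (0:ℝ) < (2:ℝ) ^ (-((k:ℝ)+1)) := Real.rpow_pos_of_pos two_pos _
    have h2' : (0:ℝ) < (2:ℝ) ^ (-(k:ℝ)) := Real.rpow_pos_of_pos two_pos _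
    rw [← Real.rpow_natCast (r * (2:ℝ) ^ (-(k:ℝ))) n,
      ← Real.rpow_natCast ((2:ℝ)^(-((n:ℝ)-a))) k,
      Real.mul_rpow hr.le h2.le, Real.mul_rpow hr.le h2'.le,
      ← Real.rpow_mul two_pos.le, ← Real.rpow_mul two_pos.le, ← Real.rpow_mul two_pos.le]
    rw [show r ^ (-a) * (2:ℝ) ^ ((-((k:ℝ)+1)) * (-a)) * (r ^ (n:ℝ) * (2:ℝ) ^ ((-(k:ℝ)) * (n:ℝ)))
        = (r ^ (-a) * r ^ (n:ℝ)) * ((2:ℝ) ^ ((-((k:ℝ)+1)) * (-a)) * (2:ℝ) ^ ((-(k:ℝ)) * (n:ℝ)))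
        from by ring]
    rw [← Real.rpow_add hr, ← Real.rpow_add two_pos]
    rw [show r ^ ((n:ℝ) - a) * (2:ℝ)^a * (2:ℝ) ^ (-((n:ℝ)-a) * (k:ℝ))
        = r ^ ((n:ℝ) - a) * ((2:ℝ)^a * (2:ℝ) ^ (-((n:ℝ)-a) * (k:ℝ))) from by ring,
      ← Real.rpow_add two_pos]
    congr 1
    · ring
    · ring
  -- sum up
  have hq : ENNReal.ofReal ((2:ℝ)^(-((n:ℝ)-a))) < 1 := by
    rw [← ENNReal.ofReal_one]
    apply ENNReal.ofReal_lt_ofReal_iff_of_nonneg (by positivity) |>.2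
    apply Real.rpow_lt_one_of_one_lt_of_neg one_lt_two
    have : a < (n:ℝ) := han
    linarith
  calc ∫⁻ z : E n in Metric.ball 0 r, ENNReal.ofReal (‖z‖ ^ (-a))
      ≤ ∫⁻ z : E n in ({0} : Set (E n)) ∪ ⋃ k, A k, ENNReal.ofReal (‖z‖ ^ (-a)) := by
        apply lintegral_mono_set
        intro z hz
        by_cases h0 : z = 0
        · exact Or.inl (by simp [h0])
        · exact Or.inr (hcover ⟨hz, h0⟩)
    _ ≤ (∫⁻ z : E n in ({0} : Set (E n)), ENNReal.ofReal (‖z‖ ^ (-a)))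
        + ∫⁻ z : E n in ⋃ k, A k, ENNReal.ofReal (‖z‖ ^ (-a)) := lintegral_union_le _ _ _
    _ ≤ 0 + ∑' k, ∫⁻ z : E n in A k, ENNReal.ofReal (‖z‖ ^ (-a)) :=
        add_le_add (le_of_eq (setLIntegral_measure_zero _ _ (measure_singleton 0)))
          (lintegral_iUnion_le _ _)
    _ ≤ ∑' k, (ENNReal.ofReal (r ^ ((n:ℝ) - a) * (2:ℝ)^a)
          * (ENNReal.ofReal ((2:ℝ)^(-((n:ℝ)-a))))^k * volume (Metric.ball (0:E n) 1)) := by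
        rw [zero_add]
        apply ENNReal.tsum_le_tsum
        intro k
        rw [← hconst k]
        exact key k
    _ = ENNReal.ofReal (r ^ ((n:ℝ) - a) * (2:ℝ)^a) * volume (Metric.ball (0:E n) 1)
          * ∑' k, (ENNReal.ofReal ((2:ℝ)^(-((n:ℝ)-a))))^k := by
        rw [← ENNReal.tsum_mul_left]
        congr 1
        ext k
        ring
    _ < ⊤ := by
        apply ENNReal.mul_lt_top
        · exact ENNReal.mul_lt_top ENNReal.ofReal_lt_top measure_ball_lt_top
        · rw [ENNReal.tsum_geometric]
          rw [ENNReal.inv_lt_top, tsub_pos_iff_lt]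
          exact hq


lemma measurable_rpow_const_of_nonneg {α : Type*} [MeasurableSpace α] {c : ℝ} (hc : c ≠ 0)
    {g : α → ℝ} (hg : Measurable g) (hg0 : ∀ x, 0 ≤ g x) :
    Measurable fun x => g x ^ c := by
  have h : (fun x => g x ^ c) = fun x =>
      if g x = 0 then 0 else Real.exp (Real.log (g x) * c) := by
    funext x
    by_cases h : g x = 0
    · simp [h, Real.zero_rpow hc]
    · rw [if_neg h, Real.rpow_def_of_pos (lt_of_le_of_ne (hg0 x) (Ne.symm h))]
  rw [h]
  exact Measurable.ite (hg (measurableSet_singleton 0)) measurable_const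
    (Real.measurable_exp.comp ((Real.measurable_log.comp hg).mul_const c))


lemma outer_lintegral0 {m : ℕ} {Ω : Set (E (m+1))} (hΩm : MeasurableSet Ω)
    (hΩvol : volume Ω < ⊤) {C : ℝ≥0∞} (hC : C ≠ ⊤) {s0 : ℝ} (hs0 : 0 < s0)
    (hband : ∀ s : ℝ, 0 < s → s ≤ s0 →
      volume {x | x ∈ Ω ∧ Metric.infDist x Ωᶜ < s} ≤ ENNReal.ofReal s * C) :
    ∫⁻ x in Ω, ENNReal.ofReal ((Metric.infDist x Ωᶜ) ^ (-(2⁻¹:ℝ))) < ⊤ := by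
  set f : E (m+1) → ℝ := fun x => (Metric.infDist x Ωᶜ) ^ (-(2⁻¹:ℝ)) with hf
  have hfm : Measurable f :=
    measurable_rpow_const_of_nonneg (by norm_num) (continuous_infDist_pt Ωᶜ).measurable
      (fun x => Metric.infDist_nonneg)
  rw [lintegral_eq_lintegral_meas_lt (volume.restrict Ω)
    (ae_of_all _ fun x => Real.rpow_nonneg Metric.infDist_nonneg _) hfm.aemeasurable]
  set T : ℝ := max 1 (s0 ^ (-(2⁻¹:ℝ))) with hT
  have hT1 : (1:ℝ) ≤ T := le_max_left _ _
  have hT0 : (0:ℝ) < T := by linarith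
  have hTs0 : T ^ (-2:ℝ) ≤ s0 := by
    have h1 : s0 ^ (-(2⁻¹:ℝ)) ≤ T := le_max_right _ _
    have h2 : T ^ (-2:ℝ) ≤ (s0 ^ (-(2⁻¹:ℝ))) ^ (-2:ℝ) :=
      Real.rpow_le_rpow_of_nonpos (Real.rpow_pos_of_pos hs0 _) h1 (by norm_num)
    calc T ^ (-2:ℝ) ≤ (s0 ^ (-(2⁻¹:ℝ))) ^ (-2:ℝ) := h2
      _ = s0 := by
        rw [← Real.rpow_mul hs0.le]
        norm_num
  have hsplit : Ioi (0:ℝ) = Ioc 0 T ∪ Ioi T := (Ioc_union_Ioi_eq_Ioi hT0.le).symm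
  rw [hsplit]
  apply lt_of_le_of_lt (lintegral_union_le _ _ _)
  have hbd1 : ∫⁻ t in Ioc (0:ℝ) T, (volume.restrict Ω) {a | t < f a} < ⊤ := by
    have h1 : ∀ t ∈ Ioc (0:ℝ) T, (volume.restrict Ω) {a | t < f a} ≤ volume Ω := by
      intro t _
      calc (volume.restrict Ω) {a | t < f a} ≤ (volume.restrict Ω) univ :=
            measure_mono (subset_univ _)
        _ = volume Ω := by rw [Measure.restrict_apply_univ]
    calc ∫⁻ t in Ioc (0:ℝ) T, (volume.restrict Ω) {a | t < f a}
        ≤ ∫⁻ _t in Ioc (0:ℝ) T, volume Ω := setLIntegral_mono' measurableSet_Ioc h1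
      _ = volume Ω * volume (Ioc (0:ℝ) T) := setLIntegral_const _ _
      _ < ⊤ := ENNReal.mul_lt_top hΩvol (by rw [Real.volume_Ioc]; exact ENNReal.ofReal_lt_top)
  have hbd2 : ∫⁻ t in Ioi T, (volume.restrict Ω) {a | t < f a} < ⊤ := by
    have h2 : ∀ t ∈ Ioi T, (volume.restrict Ω) {a | t < f a}
        ≤ ENNReal.ofReal (t ^ (-2:ℝ)) * C := by
      intro t htT
      have htT' : T < t := htT
      have ht0 : (0:ℝ) < t := lt_trans hT0 htT'
      have hmeas : MeasurableSet {a | t < f a} := measurableSet_lt measurable_const hfm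
      rw [Measure.restrict_apply hmeas]
      have hsub : {a | t < f a} ∩ Ω ⊆ {x | x ∈ Ω ∧ Metric.infDist x Ωᶜ < t ^ (-2:ℝ)} := by
        rintro x ⟨hxf, hxΩ⟩
        refine ⟨hxΩ, ?_⟩
        set d := Metric.infDist x Ωᶜ with hd
        have hd0 : 0 ≤ d := Metric.infDist_nonneg
        rcases eq_or_lt_of_le hd0 with h | h
        · rw [← h]; exact Real.rpow_pos_of_pos ht0 _
        have hlt : t < d ^ (-(2⁻¹:ℝ)) := hxf
        have h3 : (d ^ (-(2⁻¹:ℝ))) ^ (-2:ℝ) < t ^ (-2:ℝ) :=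
          Real.rpow_lt_rpow_of_neg ht0 hlt (by norm_num)
        have h4 : (d ^ (-(2⁻¹:ℝ))) ^ (-2:ℝ) = d := by
          rw [← Real.rpow_mul hd0]
          norm_num
        rwa [h4] at h3
      have htpos : (0:ℝ) < t ^ (-2:ℝ) := Real.rpow_pos_of_pos ht0 _
      have hts0 : t ^ (-2:ℝ) ≤ s0 :=
        le_trans (Real.rpow_le_rpow_of_nonpos hT0 htT'.le (by norm_num)) hTs0
      exact le_trans (measure_mono hsub) (hband _ htpos hts0)
    calc ∫⁻ t in Ioi T, (volume.restrict Ω) {a | t < f a}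
        ≤ ∫⁻ t in Ioi T, ENNReal.ofReal (t ^ (-2:ℝ)) * C := setLIntegral_mono' measurableSet_Ioi h2
      _ = (∫⁻ t in Ioi T, ENNReal.ofReal (t ^ (-2:ℝ))) * C := lintegral_mul_const' C _ hC
      _ < ⊤ := by
          apply ENNReal.mul_lt_top _ hC.lt_top
          have hint : IntegrableOn (fun t : ℝ => t ^ (-2:ℝ)) (Ioi T) :=
            integrableOn_Ioi_rpow_of_lt (by norm_num) hT0
          have h6 : (∫⁻ t in Ioi T, (‖(t:ℝ) ^ (-2:ℝ)‖₊ : ℝ≥0∞)) < ⊤ :=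
            (hasFiniteIntegral_def _ _).1 hint.2
          apply lt_of_le_of_lt _ h6
          apply lintegral_mono
          intro t
          exact Real.ofReal_le_enorm _
  exact ENNReal.add_lt_top.2 ⟨hbd1, hbd2⟩


lemma dist_band {n : ℕ} (hn : 1 ≤ n) {Ω : Set (E n)} (hΩb : IsBounded Ω)
    {w : E n → ℝ} (hw : ContDiff ℝ (⊤ : ℕ∞) w)
    (hwc : Tendsto w (cocompact (E n)) atTop)
    (hΩw : Ω = {x | w x < 0})
    (hgrad : ∀ x, w x = 0 → fderiv ℝ w x ≠ 0) :
    ∃ C : ℝ≥0∞, C ≠ ⊤ ∧ ∃ s0 > 0, ∀ s : ℝ, 0 < s → s ≤ s0 →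
      volume {x | x ∈ Ω ∧ Metric.infDist x Ωᶜ < s} ≤ ENNReal.ofReal s * C := by
  obtain ⟨m, rfl⟩ : ∃ m, n = m + 1 := ⟨n - 1, (Nat.succ_pred_eq_of_pos hn).symm⟩
  exact dist_band0 hΩb hw hwc hΩw hgrad

lemma outer_lintegral {n : ℕ} (hn : 1 ≤ n) {Ω : Set (E n)} (hΩm : MeasurableSet Ω)
    (hΩvol : volume Ω < ⊤) {C : ℝ≥0∞} (hC : C ≠ ⊤) {s0 : ℝ} (hs0 : 0 < s0)
    (hband : ∀ s : ℝ, 0 < s → s ≤ s0 →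
      volume {x | x ∈ Ω ∧ Metric.infDist x Ωᶜ < s} ≤ ENNReal.ofReal s * C) :
    ∫⁻ x in Ω, ENNReal.ofReal ((Metric.infDist x Ωᶜ) ^ (-(2⁻¹:ℝ))) < ⊤ := by
  obtain ⟨m, rfl⟩ : ∃ m, n = m + 1 := ⟨n - 1, (Nat.succ_pred_eq_of_pos hn).symm⟩
  exact outer_lintegral0 hΩm hΩvol hC hs0 hband

/-- for `Ω` bounded open with smooth boundary and `κ : ℝⁿ×ℝⁿ → [0,1]`
measurable with compact support,
`∬ (1_Ω(x) 1_{Ω^c}(y) / |x−y|ⁿ) κ(x,y) dx dy < ∞`. -/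
theorem statement_1 (n : ℕ) (hn : 1 ≤ n) (Ω : Set (E n))
    (hΩo : IsOpen Ω) (hΩb : IsBounded Ω) (hΩs : HasSmoothBoundary Ω)
    (κ : E n × E n → ℝ) (hκm : Measurable κ)
    (hκ01 : ∀ p, κ p ∈ Set.Icc (0:ℝ) 1) (hκc : HasCompactSupport κ) :
    (∫⁻ x : E n, ∫⁻ y : E n,
        ENNReal.ofReal
          (Set.indicator Ω (fun _ => (1:ℝ)) x * Set.indicator Ωᶜ (fun _ => (1:ℝ)) y
            / ‖x - y‖ ^ n * κ (x, y))) < ⊤ := by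
  obtain ⟨w, hw, hwc, hΩw, hgrad⟩ := hΩs
  -- support radius
  obtain ⟨R', hR'⟩ := hκc.isBounded.subset_closedBall 0
  set R : ℝ := max R' 1 with hRdef
  have hR1 : (1:ℝ) ≤ R := le_max_right _ _
  have hR0 : (0:ℝ) < R := by linarith
  have hsupp : ∀ p : E n × E n, κ p ≠ 0 → ‖p.1‖ ≤ R ∧ ‖p.2‖ ≤ R := by
    intro p hp
    have h1 : p ∈ tsupport κ := subset_tsupport κ (by simpa [Function.mem_support] using hp)
    have h2 : ‖p‖ ≤ R := by
      have := hR' h1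
      rw [Metric.mem_closedBall, dist_zero_right] at this
      exact this.trans (le_max_left _ _)
    exact ⟨(norm_fst_le p).trans h2, (norm_snd_le p).trans h2⟩
  set a : ℝ := (n : ℝ) - 2⁻¹ with hadef
  have ha0 : 0 ≤ a := by
    have : (1:ℝ) ≤ (n:ℝ) := by exact_mod_cast hn
    rw [hadef]; linarith
  have han : a < (n:ℝ) := by rw [hadef]; norm_num
  -- the dominating function
  set I1 : E n → ℝ≥0∞ := fun x => (Ω ∩ Metric.closedBall 0 R).indicator
    (fun x' => ENNReal.ofReal ((Metric.infDist x' Ωᶜ) ^ (-(2⁻¹:ℝ)))) x with hI1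
  set I2 : E n → E n → ℝ≥0∞ := fun x y => (Metric.ball x (3*R)).indicator
    (fun y' => ENNReal.ofReal (‖x - y'‖ ^ (-a))) y with hI2
  have hpt : ∀ x y : E n,
      ENNReal.ofReal (Set.indicator Ω (fun _ => (1:ℝ)) x * Set.indicator Ωᶜ (fun _ => (1:ℝ)) y
        / ‖x - y‖ ^ n * κ (x, y)) ≤ I1 x * I2 x y := by
    intro x y
    by_cases hx : x ∈ Ω
    swap
    · simp [Set.indicator_of_notMem hx]
    by_cases hy : y ∈ Ωᶜ
    swap
    · simp [Set.indicator_of_notMem hy]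
    by_cases hκ0 : κ (x, y) = 0
    · simp [hκ0]
    -- main case
    obtain ⟨hxR, hyR⟩ := hsupp (x, y) hκ0
    have hD : (0:ℝ) < ‖x - y‖ := by
      have hx' : x ∉ Ωᶜ := by simpa using hx
      have hd0 : 0 < Metric.infDist x Ωᶜ :=
        (hΩo.isClosed_compl.notMem_iff_infDist_pos ⟨y, hy⟩).1 hx'
      have : Metric.infDist x Ωᶜ ≤ dist x y := Metric.infDist_le_dist_of_mem hy
      rw [dist_eq_norm] at this
      linarith
    have hd0 : 0 < Metric.infDist x Ωᶜ :=
      (hΩo.isClosed_compl.notMem_iff_infDist_pos ⟨y, hy⟩).1 (by simpa using hx)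
    have hdD : Metric.infDist x Ωᶜ ≤ ‖x - y‖ := by
      have h5 : Metric.infDist x Ωᶜ ≤ dist x y := Metric.infDist_le_dist_of_mem hy
      rwa [dist_eq_norm] at h5
    have hyb : y ∈ Metric.ball x (3*R) := by
      rw [Metric.mem_ball, dist_comm, dist_eq_norm]
      calc ‖x - y‖ ≤ ‖x‖ + ‖y‖ := norm_sub_le x y
        _ ≤ R + R := add_le_add hxR hyR
        _ < 3 * R := by linarith
    have hxb : x ∈ Ω ∩ Metric.closedBall 0 R :=
      ⟨hx, by rwa [Metric.mem_closedBall, dist_zero_right]⟩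
    simp only [hI1, hI2, Set.indicator_of_mem hxb, Set.indicator_of_mem hyb]
    rw [← ENNReal.ofReal_mul (Real.rpow_nonneg Metric.infDist_nonneg _)]
    apply ENNReal.ofReal_le_ofReal
    rw [Set.indicator_of_mem hx, Set.indicator_of_mem hy]
    have hκle := (hκ01 (x, y)).2
    have hκ0' := (hκ01 (x, y)).1
    have hpow : (0:ℝ) < ‖x - y‖ ^ n := by positivity
    have step1 : 1 * 1 / ‖x - y‖ ^ n * κ (x, y) ≤ 1 / ‖x - y‖ ^ n := by
      rw [one_mul]
      exact mul_le_of_le_one_right (by positivity) hκle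
    have step2 : 1 / ‖x - y‖ ^ n = ‖x - y‖ ^ (-(n:ℝ)) := by
      rw [one_div, ← Real.rpow_natCast ‖x - y‖ n, ← Real.rpow_neg hD.le]
    have step3 : ‖x - y‖ ^ (-(n:ℝ))
        = ‖x - y‖ ^ (-(2⁻¹:ℝ)) * ‖x - y‖ ^ (-a) := by
      rw [← Real.rpow_add hD]
      congr 1
      rw [hadef]; ring
    have step4 : ‖x - y‖ ^ (-(2⁻¹:ℝ)) ≤ (Metric.infDist x Ωᶜ) ^ (-(2⁻¹:ℝ)) :=
      Real.rpow_le_rpow_of_nonpos hd0 hdD (by norm_num)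
    calc 1 * 1 / ‖x - y‖ ^ n * κ (x, y) ≤ 1 / ‖x - y‖ ^ n := step1
      _ = ‖x - y‖ ^ (-(2⁻¹:ℝ)) * ‖x - y‖ ^ (-a) := by rw [step2, step3]
      _ ≤ (Metric.infDist x Ωᶜ) ^ (-(2⁻¹:ℝ)) * ‖x - y‖ ^ (-a) :=
          mul_le_mul_of_nonneg_right step4 (Real.rpow_nonneg hD.le _)
  -- inner integral
  have hI1top : ∀ x, I1 x ≠ ⊤ := by
    intro x
    simp only [hI1]
    by_cases h : x ∈ Ω ∩ Metric.closedBall 0 R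
    · rw [Set.indicator_of_mem h]; exact ENNReal.ofReal_ne_top
    · rw [Set.indicator_of_notMem h]; exact ENNReal.zero_ne_top
  set J : ℝ≥0∞ := ∫⁻ z : E n in Metric.ball 0 (3*R), ENNReal.ofReal (‖z‖ ^ (-a)) with hJ
  have hJtop : J < ⊤ := ball_rpow_lintegral hn ha0 han (by linarith)
  have hinner : ∀ x : E n, ∫⁻ y, I1 x * I2 x y = I1 x * J := by
    intro x
    rw [lintegral_const_mul' _ _ (hI1top x)]
    congr 1
    have hswap : ∀ y : E n, I2 x y = (Metric.ball (0:E n) (3*R)).indicator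
        (fun z => ENNReal.ofReal (‖z‖ ^ (-a))) (y - x) := by
      intro y
      simp only [hI2]
      by_cases h : y ∈ Metric.ball x (3*R)
      · rw [Set.indicator_of_mem h, Set.indicator_of_mem (by
          rwa [Metric.mem_ball, dist_zero_right, ← dist_eq_norm])]
        rw [norm_sub_rev x y]
      · rw [Set.indicator_of_notMem h, Set.indicator_of_notMem (by
          rw [Metric.mem_ball, dist_zero_right, ← dist_eq_norm]
          rwa [Metric.mem_ball] at h)]
    calc ∫⁻ y, I2 x y = ∫⁻ y, (Metric.ball (0:E n) (3*R)).indicator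
          (fun z => ENNReal.ofReal (‖z‖ ^ (-a))) (y - x) := by
            congr 1; funext y; exact hswap y
      _ = ∫⁻ z, (Metric.ball (0:E n) (3*R)).indicator
          (fun z => ENNReal.ofReal (‖z‖ ^ (-a))) z := by
            simp_rw [sub_eq_add_neg]
            exact lintegral_add_right_eq_self _ (-x)
      _ = J := by rw [hJ, lintegral_indicator measurableSet_ball]
  -- outer integral
  obtain ⟨C, hC, s0, hs0, hband⟩ := dist_band hn hΩb hw hwc hΩw hgrad
  have hΩvol : volume Ω < ⊤ := by
    obtain ⟨R0, hR0'⟩ := hΩb.subset_closedBall 0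
    exact lt_of_le_of_lt (measure_mono hR0') (isCompact_closedBall _ _).measure_lt_top
  have houter : ∫⁻ x, I1 x < ⊤ := by
    simp only [hI1]
    rw [lintegral_indicator (hΩo.measurableSet.inter measurableSet_closedBall)]
    apply lt_of_le_of_lt _ (outer_lintegral hn hΩo.measurableSet hΩvol hC hs0 hband)
    exact lintegral_mono_set inter_subset_left
  calc (∫⁻ x : E n, ∫⁻ y : E n, ENNReal.ofReal
        (Set.indicator Ω (fun _ => (1:ℝ)) x * Set.indicator Ωᶜ (fun _ => (1:ℝ)) y
          / ‖x - y‖ ^ n * κ (x, y)))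
      ≤ ∫⁻ x : E n, ∫⁻ y : E n, I1 x * I2 x y :=
        lintegral_mono fun x => lintegral_mono fun y => hpt x y
    _ = ∫⁻ x : E n, I1 x * J := by
        congr 1; funext x; exact hinner x
    _ = (∫⁻ x : E n, I1 x) * J := lintegral_mul_const' J _ hJtop.ne
    _ < ⊤ := ENNReal.mul_lt_top houter hJtop

end Auxiliary
end
end

section
/- Let Ω ⊆ ℝⁿ be a bounded open set with smooth boundary, let c > 0, and let χ̄ : ℝⁿ → [0,1] be a C^∞ function with χ̄(u) = 0 whenever |u| ≤ c. Then there exists a constant C such that for every ħ ∈ (0,1], ∫∫_{ℝⁿ×ℝⁿ} χ̄((x−y)/ħ) · 1_Ω(x) 1_{Ω^c}(y) / |x−y|^{n+2} dx dy ≤ C/ħ. -/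
open MeasureTheory Filter Bornology
open scoped Topology ENNReal

noncomputable section

/-- Dyadic localization: any `z ≥ 1` lies in some `[2^k, 2^(k+1))`. -/
lemma dyadic_loc {z : ℝ} (hz : 1 ≤ z) : ∃ k : ℕ, (2:ℝ)^k ≤ z ∧ z < 2^(k+1) := by
  have hex : ∃ k : ℕ, z < 2^(k+1) := by
    obtain ⟨k, hk⟩ := pow_unbounded_of_one_lt z (by norm_num : (1:ℝ) < 2)
    exact ⟨k, hk.trans_le (by gcongr <;> norm_num)⟩
  classical
  refine ⟨Nat.find hex, ?_, Nat.find_spec hex⟩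
  rcases Nat.eq_zero_or_pos (Nat.find hex) with h0 | h0
  · simpa [h0] using hz
  · have := Nat.find_min hex (m := Nat.find hex - 1) (by omega)
    push_neg at this
    have : (2:ℝ) ^ (Nat.find hex - 1 + 1) ≤ z := this
    have heq : Nat.find hex - 1 + 1 = Nat.find hex := by omega
    rwa [heq] at this

/-- Membership of intermediate points in a segment. -/
lemma mem_segment_aux {V : Type*} [NormedAddCommGroup V] [NormedSpace ℝ V]
    (x v : V) {σ s : ℝ} (h0 : 0 ≤ σ) (hs : σ ≤ s) :
    x + σ • v ∈ segment ℝ x (x + s • v) := by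
  rcases eq_or_lt_of_le (h0.trans hs) with h | h
  · have hσ : σ = 0 := le_antisymm (hs.trans h.symm.le) h0
    simp [hσ, left_mem_segment]
  · refine ⟨1 - σ/s, σ/s, by rw [sub_nonneg]; exact (div_le_one h).2 hs, div_nonneg h0 h.le, by ring, ?_⟩
    rw [smul_add, smul_smul, div_mul_cancel₀ _ h.ne']
    module

example : True := trivial


/-- MVT along a direction: if the directional derivative is ≥ 1/2 along the path,
the function grows at least `s/2`. -/
lemma mvt_dir {n : ℕ} {w : E n → ℝ} (hw : ContDiff ℝ (⊤ : ℕ∞) w) (x v : E n) {s : ℝ} (hs : 0 ≤ s)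
    (hd : ∀ σ ∈ Set.Icc (0:ℝ) s, (1:ℝ)/2 ≤ fderiv ℝ w (x + σ • v) v) :
    w x + s/2 ≤ w (x + s • v) := by
  have hdiff : Differentiable ℝ w := hw.differentiable (by simp)
  have hderiv : ∀ σ : ℝ, HasDerivAt (fun σ : ℝ => w (x + σ • v)) (fderiv ℝ w (x + σ • v) v) σ := by
    intro σ
    have h1 : HasDerivAt (fun σ : ℝ => x + σ • v) v σ := by
      simpa using ((hasDerivAt_id σ).smul_const v).const_add x
    exact (hdiff (x + σ • v)).hasFDerivAt.comp_hasDerivAt σ h1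
  set g : ℝ → ℝ := fun σ => w (x + σ • v) - σ/2 with hg
  have hgderiv : ∀ σ : ℝ, HasDerivAt g (fderiv ℝ w (x + σ • v) v - 1/2) σ := by
    intro σ
    exact (hderiv σ).sub (by simpa using (hasDerivAt_id σ).div_const 2)
  have hmono : MonotoneOn g (Set.Icc 0 s) := by
    apply monotoneOn_of_deriv_nonneg (convex_Icc 0 s)
    · exact Continuous.continuousOn (by
        exact ((hw.continuous.comp (by continuity)).sub (by continuity)))
    · intro σ _
      exact (hgderiv σ).differentiableAt.differentiableWithinAt
    · intro σ hσ
      rw [(hgderiv σ).deriv]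
      have := hd σ (interior_subset (s := Set.Icc (0:ℝ) s) hσ)
      linarith
  have h0s := hmono (Set.left_mem_Icc.2 hs) (Set.right_mem_Icc.2 hs) hs
  simp only [hg, zero_smul, add_zero] at h0s
  linarith

/-- Slab bound in a ball: if the directional derivative of `w` along `v` is ≥ 1/2 on
`closedBall p ρ`, then the part of the half-sized ball where `w ∈ [-a, 0)` has measure `O(a)`. -/
lemma slab_bound {n : ℕ} {w : E n → ℝ} (hw : ContDiff ℝ (⊤ : ℕ∞) w) (p v : E n) {ρ : ℝ} (hρ : 0 < ρ)
    (hd : ∀ x ∈ Metric.closedBall p ρ, (1:ℝ)/2 ≤ fderiv ℝ w x v) :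
    ∀ a : ℝ, 0 < a →
      volume (Metric.closedBall p (ρ/2) ∩ {x | w x ∈ Set.Ico (-a) 0}) ≤
        ENNReal.ofReal ((volume (Metric.closedBall p ρ)).toReal * (4 * ‖v‖ / ρ) * a) := by
  intro a ha
  have hv : v ≠ 0 := by
    intro h
    have := hd p (Metric.mem_closedBall_self hρ.le)
    rw [h] at this
    simp at this
    linarith
  have hvn : 0 < ‖v‖ := norm_pos_iff.2 hv
  set S := Metric.closedBall p (ρ/2) ∩ {x | w x ∈ Set.Ico (-a) 0} with hS
  have hSmeas : MeasurableSet S :=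
    (measurableSet_closedBall).inter
      ((measurableSet_Ico).preimage hw.continuous.measurable)
  set M : ℕ := ⌊ρ / (4 * a * ‖v‖)⌋₊ with hM
  set T : ℕ → Set (E n) := fun m => (fun y => y - ((2*a*m : ℝ)) • v) ⁻¹' S with hT
  -- key growth estimate along the direction v inside closedBall p ρ
  have key : ∀ x ∈ Metric.closedBall p ρ, ∀ s : ℝ, 0 ≤ s →
      x + s • v ∈ Metric.closedBall p ρ → w x + s/2 ≤ w (x + s • v) := by
    intro x hx s hs hxs
    apply mvt_dir hw x v hs
    intro σ hσ
    apply hd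
    exact (convex_closedBall p ρ).segment_subset hx hxs (mem_segment_aux x v hσ.1 hσ.2)
  have hdisj0 : ∀ m' m : ℕ, m' < m → Disjoint (T m') (T m) := by
    intro m' m hlt
    rw [Set.disjoint_left]
    intro y hy' hy
    have hx'S : y - (2*a*m' : ℝ) • v ∈ S := hy'
    have hxS : y - (2*a*m : ℝ) • v ∈ S := hy
    set x : E n := y - (2*a*m : ℝ) • v with hx
    set x' : E n := y - (2*a*m' : ℝ) • v with hx'
    set s : ℝ := 2*a*((m:ℝ) - m') with hs
    have hmm' : (m':ℝ) + 1 ≤ m := by exact_mod_cast hlt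
    have hspos : (0:ℝ) < s := by
      have : (0:ℝ) < (m:ℝ) - m' := by linarith
      positivity
    have hxx' : x + s • v = x' := by
      simp only [hx, hx', hs]
      module
    have hxb : x ∈ Metric.closedBall p ρ :=
      Metric.closedBall_subset_closedBall (by linarith) hxS.1
    have hx'b : x + s • v ∈ Metric.closedBall p ρ := by
      rw [hxx']
      exact Metric.closedBall_subset_closedBall (by linarith) hx'S.1
    have hgrow := key x hxb s hspos.le hx'b
    rw [hxx'] at hgrow
    have h1 : -a ≤ w x := hxS.2.1
    have h2 : w x' < 0 := hx'S.2.2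
    have h3 : a ≤ s/2 := by
      rw [hs]
      nlinarith
    linarith
  have hdisj : (↑(Finset.range (M+1)) : Set ℕ).PairwiseDisjoint T := by
    intro m _ m' _ hne
    rcases lt_or_gt_of_ne hne with h | h
    · exact hdisj0 m m' h
    · exact (hdisj0 m' m h).symm
  have hTmeas : ∀ m : ℕ, MeasurableSet (T m) := by
    intro m
    exact hSmeas.preimage (measurable_id.sub measurable_const)
  have hTvol : ∀ m : ℕ, volume (T m) = volume S := by
    intro m
    have : (fun y : E n => y - (2*a*m : ℝ) • v) = fun y => y + (-((2*a*m : ℝ) • v)) := by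
      funext y; rw [sub_eq_add_neg]
    rw [hT]
    simp only [this]
    exact measure_preimage_add_right volume _ S
  have hTsub : ∀ m ∈ Finset.range (M+1), T m ⊆ Metric.closedBall p ρ := by
    intro m hm y hy
    have hxS : y - (2*a*m : ℝ) • v ∈ S := hy
    have h1 : dist (y - (2*a*m : ℝ) • v) p ≤ ρ/2 := Metric.mem_closedBall.1 hxS.1
    have hmM : (m:ℝ) ≤ M := by
      have : m ≤ M := by simpa [Nat.lt_succ_iff] using Finset.mem_range.1 hm
      exact_mod_cast this
    have hMle : (M:ℝ) ≤ ρ / (4*a*‖v‖) := Nat.floor_le (by positivity)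
    have h2 : ‖(2*a*m : ℝ) • v‖ ≤ ρ/2 := by
      rw [norm_smul, Real.norm_eq_abs, abs_of_nonneg (by positivity)]
      calc (2*a*m) * ‖v‖ ≤ (2*a*(ρ/(4*a*‖v‖))) * ‖v‖ := by
            apply mul_le_mul_of_nonneg_right _ hvn.le
            have := hmM.trans hMle
            nlinarith
        _ = ρ/2 := by field_simp; ring
    rw [Metric.mem_closedBall]
    calc dist y p ≤ dist y (y - (2*a*m : ℝ) • v) + dist (y - (2*a*m : ℝ) • v) p := dist_triangle _ _ _
      _ ≤ ρ/2 + ρ/2 := by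
          apply add_le_add _ h1
          rw [dist_eq_norm]
          simpa using h2
      _ = ρ := by ring
  -- counting
  have hcount : ((M:ℝ≥0∞)+1) * volume S ≤ volume (Metric.closedBall p ρ) := by
    have hsum : ∑ m ∈ Finset.range (M+1), volume (T m) = volume (⋃ m ∈ Finset.range (M+1), T m) :=
      (measure_biUnion_finset hdisj (fun m _ => hTmeas m)).symm
    have : ∑ m ∈ Finset.range (M+1), volume (T m) = ((M:ℝ≥0∞)+1) * volume S := by
      simp [hTvol, Finset.sum_const]

    rw [← this]
    rw [hsum]
    apply measure_mono
    exact Set.iUnion₂_subset hTsub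
  have hfin : volume (Metric.closedBall p ρ) ≠ ⊤ := measure_closedBall_lt_top.ne
  have hMpos : ((M:ℝ≥0∞)+1) ≠ 0 := by simp
  have hMfin : ((M:ℝ≥0∞)+1) ≠ ⊤ := by simp
  have hle : volume S ≤ ((M:ℝ≥0∞)+1)⁻¹ * volume (Metric.closedBall p ρ) := by
    calc volume S = ((M:ℝ≥0∞)+1)⁻¹ * (((M:ℝ≥0∞)+1) * volume S) := by
          rw [← mul_assoc, ENNReal.inv_mul_cancel hMpos hMfin, one_mul]
      _ ≤ _ := by gcongr
  have hinv : ((M:ℝ≥0∞)+1)⁻¹ ≤ ENNReal.ofReal (4*a*‖v‖/ρ) := by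
    have h1 : ρ/(4*a*‖v‖) < (M:ℝ)+1 := Nat.lt_floor_add_one _
    have h2 : ENNReal.ofReal (ρ/(4*a*‖v‖)) ≤ ((M:ℝ≥0∞)+1) := by
      calc ENNReal.ofReal (ρ/(4*a*‖v‖)) ≤ ENNReal.ofReal ((M:ℝ)+1) := ENNReal.ofReal_le_ofReal h1.le
        _ = (M:ℝ≥0∞)+1 := by
            rw [ENNReal.ofReal_add (by positivity) zero_le_one]
            simp [ENNReal.ofReal_natCast]
    have h3 : ENNReal.ofReal (4*a*‖v‖/ρ) = (ENNReal.ofReal (ρ/(4*a*‖v‖)))⁻¹ := by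
      rw [← ENNReal.ofReal_inv_of_pos (by positivity)]
      congr 1
      field_simp
    rw [h3]
    exact ENNReal.inv_le_inv.2 h2
  calc volume S ≤ ((M:ℝ≥0∞)+1)⁻¹ * volume (Metric.closedBall p ρ) := hle
    _ ≤ ENNReal.ofReal (4*a*‖v‖/ρ) * volume (Metric.closedBall p ρ) := by gcongr
    _ = ENNReal.ofReal (4*a*‖v‖/ρ) * ENNReal.ofReal ((volume (Metric.closedBall p ρ)).toReal) := by
        rw [ENNReal.ofReal_toReal hfin]
    _ = ENNReal.ofReal ((volume (Metric.closedBall p ρ)).toReal * (4 * ‖v‖ / ρ) * a) := by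
        rw [← ENNReal.ofReal_mul (by positivity)]
        congr 1
        field_simp

lemma shell_bound (n : ℕ) (hn : 1 ≤ n) (Ω : Set (E n)) (hΩo : IsOpen Ω) (hΩb : IsBounded Ω)
    (w : E n → ℝ) (hw : ContDiff ℝ (⊤ : ℕ∞) w) (hcc : Tendsto w (cocompact (E n)) atTop)
    (hΩeq : Ω = {x | w x < 0}) (hgrad : ∀ x, w x = 0 → fderiv ℝ w x ≠ 0) :
    ∃ K : ℝ, 0 ≤ K ∧ ∀ t : ℝ, 0 < t →
      volume {x | x ∈ Ω ∧ Metric.infDist x Ωᶜ ≤ t} ≤ ENNReal.ofReal (K * t) := by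
  classical
  have hwc : Continuous w := hw.continuous
  -- the zero set is compact
  set Z : Set (E n) := {x | w x = 0} with hZ
  have hZclosed : IsClosed Z := isClosed_eq hwc continuous_const
  obtain ⟨K₀, hK₀c, hK₀⟩ : ∃ K₀, IsCompact K₀ ∧ K₀ᶜ ⊆ {x | 1 ≤ w x} :=
    mem_cocompact.1 (hcc.eventually (eventually_ge_atTop 1))
  have hZK : Z ⊆ K₀ := by
    intro x hx
    by_contra hxK
    have h1 : 1 ≤ w x := hK₀ hxK
    have h0 : w x = 0 := hx
    linarith
  have hZcompact : IsCompact Z := hK₀c.of_isClosed_subset hZclosed hZK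
  -- select directions and radii at each boundary point
  have hsel : ∀ p ∈ Z, ∃ v : E n, ∃ ρ : ℝ, 0 < ρ ∧
      ∀ x ∈ Metric.closedBall p ρ, (1:ℝ)/2 ≤ fderiv ℝ w x v := by
    intro p hp
    have hnz := hgrad p hp
    have hu : ∃ u, fderiv ℝ w p u ≠ 0 := by
      by_contra h
      push_neg at h
      exact hnz (ContinuousLinearMap.ext fun u => by simp [h u])
    obtain ⟨u, hu⟩ := hu
    refine ⟨(fderiv ℝ w p u)⁻¹ • u, ?_⟩
    have hval : fderiv ℝ w p ((fderiv ℝ w p u)⁻¹ • u) = 1 := by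
      rw [_root_.map_smul, smul_eq_mul, inv_mul_cancel₀ hu]
    set v := (fderiv ℝ w p u)⁻¹ • u with hv
    have hgc : Continuous (fun x => fderiv ℝ w x v) :=
      (ContinuousLinearMap.apply ℝ ℝ v).continuous.comp (hw.continuous_fderiv (by simp))
    have hopen : IsOpen {x | (1:ℝ)/2 < fderiv ℝ w x v} := isOpen_lt continuous_const hgc
    have hpmem : p ∈ {x | (1:ℝ)/2 < fderiv ℝ w x v} := by
      simp only [Set.mem_setOf_eq, hval]
      norm_num
    obtain ⟨ε, hε, hball⟩ := Metric.isOpen_iff.1 hopen p hpmem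
    refine ⟨ε/2, by positivity, fun x hx => ?_⟩
    exact (hball (lt_of_le_of_lt (Metric.mem_closedBall.1 hx) (by linarith))).le
  choose! v ρ hρpos hlow using hsel
  -- finite subcover of Z by quarter balls
  have hcover : Z ⊆ ⋃ p ∈ Z, Metric.ball p (ρ p / 4) := by
    intro p hp
    exact Set.mem_biUnion hp (Metric.mem_ball_self (by linarith [hρpos p hp]))
  obtain ⟨b', hb'Z, hb'fin, hb'cov⟩ :=
    hZcompact.elim_finite_subcover_image (fun p hp => Metric.isOpen_ball) hcover
  set J : Finset (E n) := hb'fin.toFinset with hJ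
  have hJZ : ∀ p ∈ J, p ∈ Z := fun p hp => hb'Z (hb'fin.mem_toFinset.1 hp)
  have hJcov : Z ⊆ ⋃ p ∈ J, Metric.ball p (ρ p / 4) := by
    intro z hz
    obtain ⟨p, hp, hzp⟩ := Set.mem_iUnion₂.1 (hb'cov hz)
    exact Set.mem_biUnion (hb'fin.mem_toFinset.2 hp) hzp
  -- slab constants
  set Kp : E n → ℝ := fun p => (volume (Metric.closedBall p (ρ p))).toReal * (4 * ‖v p‖ / ρ p)
    with hKp
  have hKp0 : ∀ p ∈ J, 0 ≤ Kp p := by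
    intro p hp
    have := hρpos p (hJZ p hp)
    positivity
  have hslab : ∀ p ∈ J, ∀ a : ℝ, 0 < a →
      volume (Metric.closedBall p (ρ p / 2) ∩ {x | w x ∈ Set.Ico (-a) 0}) ≤
        ENNReal.ofReal (Kp p * a) :=
    fun p hp => slab_bound hw p (v p) (hρpos p (hJZ p hp)) (hlow p (hJZ p hp))
  -- big ball and Lipschitz bound
  obtain ⟨R, hR⟩ := hΩb.subset_closedBall 0
  obtain ⟨M₀, hM₀⟩ :=
    (isCompact_closedBall (0 : E n) (R+3)).exists_bound_of_continuousOn
      ((hw.continuous_fderiv (by simp)).continuousOn)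
  set M : ℝ := |M₀| + 1 with hMdef
  have hMpos : 0 < M := by positivity
  have hlip : ∀ x ∈ Metric.closedBall (0 : E n) (R+3), ∀ y ∈ Metric.closedBall (0 : E n) (R+3),
      ‖w y - w x‖ ≤ M * ‖y - x‖ := by
    intro x hx y hy
    exact Convex.norm_image_sub_le_of_norm_fderiv_le
      (fun z _ => (hw.differentiable (by simp)).differentiableAt)
      (fun z hz => (hM₀ z hz).trans (by simp [hMdef]; linarith [le_abs_self M₀]))
      (convex_closedBall _ _) hx hy
  -- threshold
  set t₀ : ℝ := (insert (1:ℝ) (J.image (fun p => ρ p / 8))).min' (by simp) with ht₀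
  have ht₀mem := (insert (1:ℝ) (J.image (fun p => ρ p / 8))).min'_mem (by simp)
  have ht₀pos : 0 < t₀ := by
    rcases Finset.mem_insert.1 ht₀mem with h | h
    · rw [← ht₀] at h; rw [h]; norm_num
    · obtain ⟨p, hp, hpe⟩ := Finset.mem_image.1 h
      rw [← ht₀] at hpe
      rw [← hpe]
      linarith [hρpos p (hJZ p hp)]
  have ht₀le1 : t₀ ≤ 1 := Finset.min'_le _ _ (Finset.mem_insert_self _ _)
  have ht₀lep : ∀ p ∈ J, t₀ ≤ ρ p / 8 := fun p hp =>
    Finset.min'_le _ _ (Finset.mem_insert_of_mem (Finset.mem_image_of_mem _ hp))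
  -- the two constants
  set K₁ : ℝ := (∑ p ∈ J, Kp p) * (2*M+1) with hK₁
  set K₂ : ℝ := (volume (Metric.closedBall (0:E n) R)).toReal / t₀ with hK₂
  have hK₁0 : 0 ≤ K₁ := by
    apply mul_nonneg (Finset.sum_nonneg hKp0)
    linarith
  have hK₂0 : 0 ≤ K₂ := by positivity
  refine ⟨max K₁ K₂, le_max_of_le_left hK₁0, fun t ht => ?_⟩
  by_cases htt : t ≤ t₀
  · -- small t: cover the shell by the slabs
    have hsub : {x | x ∈ Ω ∧ Metric.infDist x Ωᶜ ≤ t} ⊆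
        ⋃ p ∈ J, (Metric.closedBall p (ρ p / 2) ∩ {x | w x ∈ Set.Ico (-((2*M+1)*t)) 0}) := by
      rintro x ⟨hxΩ, hxd⟩
      have hwx : w x < 0 := by rw [hΩeq] at hxΩ; exact hxΩ
      -- Ωᶜ is nonempty
      have hnt : Nontrivial (E n) := by
        refine ⟨EuclideanSpace.single (⟨0, hn⟩ : Fin n) (1:ℝ), 0, fun h => ?_⟩
        have := congrFun (congrArg (fun f : E n => (f : Fin n → ℝ)) h) ⟨0, hn⟩
        simp [EuclideanSpace.single_apply] at this
      have hne : Ωᶜ.Nonempty := by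
        rw [Set.nonempty_compl]
        intro h
        rw [h] at hΩb
        exact NormedSpace.unbounded_univ ℝ (E n) hΩb
      obtain ⟨y, hyΩc, hxy⟩ := Metric.infDist_lt_iff hne |>.1 (lt_of_le_of_lt hxd (show t < 2*t by linarith))
      have hwy : 0 ≤ w y := by
        rw [hΩeq] at hyΩc
        have : ¬ (w y < 0) := hyΩc
        linarith
      -- x and y are in the big ball
      have hxB : x ∈ Metric.closedBall (0:E n) (R+3) :=
        Metric.closedBall_subset_closedBall (by linarith) (hR hxΩ)
      have hyB : y ∈ Metric.closedBall (0:E n) (R+3) := by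
        rw [Metric.mem_closedBall] at *
        calc dist y 0 ≤ dist y x + dist x 0 := dist_triangle _ _ _
          _ ≤ 2*t + R := by
              rw [dist_comm]
              have := hR hxΩ
              rw [Metric.mem_closedBall] at this
              linarith
          _ ≤ R + 3 := by linarith
      -- find a zero of w on the segment [x, y]
      have hcont : ContinuousOn (fun σ : ℝ => w (x + σ • (y - x))) (Set.Icc 0 1) :=
        (hwc.comp (continuous_const.add (continuous_id.smul continuous_const))).continuousOn
      have hIVT := intermediate_value_Icc (zero_le_one) hcont
      have h0mem : (0:ℝ) ∈ Set.Icc (w (x + (0:ℝ) • (y - x))) (w (x + (1:ℝ) • (y - x))) := by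
        constructor
        · simpa using hwx.le
        · simpa using hwy
      obtain ⟨σ, hσ, hfσ⟩ := hIVT h0mem
      set z := x + σ • (y - x) with hz
      have hzZ : z ∈ Z := hfσ
      have hdxz : dist x z ≤ dist x y := by
        rw [dist_comm x z, hz, dist_eq_norm]
        simp only [add_sub_cancel_left]
        rw [norm_smul, Real.norm_eq_abs, abs_of_nonneg hσ.1]
        calc σ * ‖y - x‖ ≤ 1 * ‖y - x‖ := by
              apply mul_le_mul_of_nonneg_right hσ.2 (norm_nonneg _)
          _ = dist x y := by rw [one_mul, dist_comm, dist_eq_norm]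
      obtain ⟨p, hpJ, hzp⟩ := Set.mem_iUnion₂.1 (hJcov hzZ)
      have hxp : x ∈ Metric.closedBall p (ρ p / 2) := by
        rw [Metric.mem_closedBall]
        have h1 : dist z p < ρ p / 4 := Metric.mem_ball.1 hzp
        have h2 : t₀ ≤ ρ p / 8 := ht₀lep p hpJ
        calc dist x p ≤ dist x z + dist z p := dist_triangle _ _ _
          _ ≤ 2*t + ρ p / 4 := by linarith
          _ ≤ ρ p / 2 := by linarith
      refine Set.mem_biUnion hpJ ⟨hxp, ?_, hwx⟩
      -- lower bound on w x
      have hwlip := hlip x hxB y hyB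
      have : |w y - w x| ≤ M * (2*t) := by
        rw [← Real.norm_eq_abs]
        calc ‖w y - w x‖ ≤ M * ‖y - x‖ := hwlip
          _ ≤ M * (2*t) := by
              apply mul_le_mul_of_nonneg_left _ hMpos.le
              rw [← dist_eq_norm, dist_comm]
              linarith
      have habs := abs_le.1 this
      have hM2 : (0:ℝ) ≤ M * t := by positivity
      linarith [habs.2, hwy, ht.le]
    calc volume {x | x ∈ Ω ∧ Metric.infDist x Ωᶜ ≤ t}
        ≤ volume (⋃ p ∈ J, (Metric.closedBall p (ρ p / 2) ∩
            {x | w x ∈ Set.Ico (-((2*M+1)*t)) 0})) := measure_mono hsub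
      _ ≤ ∑ p ∈ J, volume (Metric.closedBall p (ρ p / 2) ∩
            {x | w x ∈ Set.Ico (-((2*M+1)*t)) 0}) := measure_biUnion_finset_le _ _
      _ ≤ ∑ p ∈ J, ENNReal.ofReal (Kp p * ((2*M+1)*t)) := by
          apply Finset.sum_le_sum
          intro p hp
          exact hslab p hp _ (by nlinarith)
      _ = ENNReal.ofReal (∑ p ∈ J, Kp p * ((2*M+1)*t)) := by
          rw [ENNReal.ofReal_sum_of_nonneg]
          intro p hp
          have := hKp0 p hp
          have h2 : (0:ℝ) ≤ (2*M+1)*t := by nlinarith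
          exact mul_nonneg this h2
      _ = ENNReal.ofReal (K₁ * t) := by
          congr 1
          rw [← Finset.sum_mul, hK₁]
          ring
      _ ≤ ENNReal.ofReal (max K₁ K₂ * t) := by
          apply ENNReal.ofReal_le_ofReal
          apply mul_le_mul_of_nonneg_right (le_max_left _ _) ht.le
  · -- large t
    push_neg at htt
    calc volume {x | x ∈ Ω ∧ Metric.infDist x Ωᶜ ≤ t}
        ≤ volume (Metric.closedBall (0:E n) R) := by
          apply measure_mono
          rintro x ⟨hxΩ, _⟩
          exact hR hxΩ
      _ = ENNReal.ofReal ((volume (Metric.closedBall (0:E n) R)).toReal) := by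
          rw [ENNReal.ofReal_toReal measure_closedBall_lt_top.ne]
      _ ≤ ENNReal.ofReal (K₂ * t) := by
          apply ENNReal.ofReal_le_ofReal
          rw [hK₂]
          rw [div_mul_eq_mul_div, le_div_iff₀ ht₀pos]
          have h0 : 0 ≤ (volume (Metric.closedBall (0:E n) R)).toReal := ENNReal.toReal_nonneg
          nlinarith
      _ ≤ ENNReal.ofReal (max K₁ K₂ * t) := by
          apply ENNReal.ofReal_le_ofReal
          apply mul_le_mul_of_nonneg_right (le_max_right _ _) ht.le

lemma radial_bound (n : ℕ) (hn : 1 ≤ n) :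
    ∃ A : ℝ, 0 ≤ A ∧ ∀ (x : E n) (r : ℝ), 0 < r →
      ∫⁻ y in {y | r ≤ dist x y}, ENNReal.ofReal ((‖x - y‖ ^ (n+2))⁻¹) ≤
        ENNReal.ofReal (A * (r^2)⁻¹) := by
  set V : ℝ≥0∞ := volume (Metric.ball (0:E n) 1) with hV
  have hVfin : V ≠ ⊤ := measure_ball_lt_top.ne
  refine ⟨V.toReal * 2^n * 2, by positivity, fun x r hr => ?_⟩
  set s : ℕ → Set (E n) := fun k => {y | 2^k * r ≤ dist x y ∧ dist x y < 2^(k+1) * r} with hs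
  have hsmeas : ∀ k, MeasurableSet (s k) := by
    intro k
    apply MeasurableSet.inter
    · exact measurableSet_le measurable_const (continuous_const.dist continuous_id).measurable
    · exact measurableSet_lt (continuous_const.dist continuous_id).measurable measurable_const
  have hsub : {y | r ≤ dist x y} ⊆ ⋃ k, s k := by
    intro y hy
    have hy' : r ≤ dist x y := hy
    have hz : 1 ≤ dist x y / r := (one_le_div hr).2 hy'
    obtain ⟨k, hk1, hk2⟩ := dyadic_loc hz
    refine Set.mem_iUnion.2 ⟨k, ?_, ?_⟩
    · calc (2:ℝ)^k * r ≤ (dist x y / r) * r := by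
            apply mul_le_mul_of_nonneg_right hk1 hr.le
        _ = dist x y := by field_simp
    · calc dist x y = (dist x y / r) * r := by field_simp
        _ < 2^(k+1) * r := by apply mul_lt_mul_of_pos_right hk2 hr
  have hterm : ∀ k : ℕ, ∫⁻ y in s k, ENNReal.ofReal ((‖x - y‖ ^ (n+2))⁻¹) ≤
      ENNReal.ofReal (2^n * (r^2)⁻¹) * ENNReal.ofReal ((1/4:ℝ)^k) * V := by
    intro k
    have hpos : (0:ℝ) < 2^k * r := by positivity
    have step1 : ∫⁻ y in s k, ENNReal.ofReal ((‖x - y‖ ^ (n+2))⁻¹) ≤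
        ∫⁻ _ in s k, ENNReal.ofReal (((2^k * r)^(n+2))⁻¹) := by
      apply setLIntegral_mono' (hsmeas k)
      intro y hy
      apply ENNReal.ofReal_le_ofReal
      apply inv_anti₀ (by positivity)
      rw [← dist_eq_norm]
      exact pow_le_pow_left₀ hpos.le hy.1 _
    have step2 : volume (s k) ≤ ENNReal.ofReal ((2^(k+1) * r)^n) * V := by
      have hsubk : s k ⊆ Metric.closedBall x (2^(k+1) * r) := by
        intro y hy
        rw [Metric.mem_closedBall, dist_comm]
        exact hy.2.le
      calc volume (s k) ≤ volume (Metric.closedBall x (2^(k+1) * r)) := measure_mono hsubk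
        _ = ENNReal.ofReal ((2^(k+1) * r)^(Module.finrank ℝ (E n))) * V :=
            Measure.addHaar_closedBall _ _ (by positivity)
        _ = ENNReal.ofReal ((2^(k+1) * r)^n) * V := by rw [finrank_euclideanSpace_fin]
    have hkey : ((2^k * r)^(n+2))⁻¹ * (2^(k+1)*r)^n = 2^n * (r^2)⁻¹ * ((1/4:ℝ))^k := by
      have h4 : (4:ℝ)^k = (2^k)^2 := by
        rw [← pow_mul, mul_comm k 2, pow_mul]
        norm_num
      rw [mul_pow, mul_pow, ← pow_mul, ← pow_mul]
      rw [one_div, inv_pow, h4]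
      field_simp
      ring
    calc ∫⁻ y in s k, ENNReal.ofReal ((‖x - y‖ ^ (n+2))⁻¹)
        ≤ ∫⁻ _ in s k, ENNReal.ofReal (((2^k * r)^(n+2))⁻¹) := step1
      _ = ENNReal.ofReal (((2^k * r)^(n+2))⁻¹) * volume (s k) := setLIntegral_const _ _
      _ ≤ ENNReal.ofReal (((2^k * r)^(n+2))⁻¹) * (ENNReal.ofReal ((2^(k+1) * r)^n) * V) := by
          gcongr
      _ = ENNReal.ofReal (((2^k * r)^(n+2))⁻¹ * (2^(k+1)*r)^n) * V := by
          rw [← mul_assoc, ← ENNReal.ofReal_mul (by positivity)]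
      _ = ENNReal.ofReal (2^n * (r^2)⁻¹ * ((1/4:ℝ))^k) * V := by rw [hkey]
      _ = ENNReal.ofReal (2^n * (r^2)⁻¹) * ENNReal.ofReal ((1/4:ℝ)^k) * V := by
          rw [← ENNReal.ofReal_mul (by positivity)]
  calc ∫⁻ y in {y | r ≤ dist x y}, ENNReal.ofReal ((‖x - y‖ ^ (n+2))⁻¹)
      ≤ ∫⁻ y in ⋃ k, s k, ENNReal.ofReal ((‖x - y‖ ^ (n+2))⁻¹) := lintegral_mono_set hsub
    _ ≤ ∑' k, ∫⁻ y in s k, ENNReal.ofReal ((‖x - y‖ ^ (n+2))⁻¹) := lintegral_iUnion_le _ _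
    _ ≤ ∑' k, ENNReal.ofReal (2^n * (r^2)⁻¹) * ENNReal.ofReal ((1/4:ℝ)^k) * V :=
        ENNReal.tsum_le_tsum hterm
    _ = ENNReal.ofReal (2^n * (r^2)⁻¹) * V * ∑' k, ENNReal.ofReal ((1/4:ℝ)^k) := by
        rw [← ENNReal.tsum_mul_left]
        congr 1
        funext k
        ring
    _ ≤ ENNReal.ofReal (2^n * (r^2)⁻¹) * V * ENNReal.ofReal 2 := by
        gcongr
        have h1 : ∀ k : ℕ, ENNReal.ofReal ((1/4:ℝ)^k) = (ENNReal.ofReal (1/4:ℝ))^k := by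
          intro k; rw [ENNReal.ofReal_pow (by norm_num)]
        simp_rw [h1]
        rw [ENNReal.tsum_geometric]
        have h2 : (1:ℝ≥0∞) - ENNReal.ofReal (1/4:ℝ) = ENNReal.ofReal (3/4:ℝ) := by
          rw [← ENNReal.ofReal_one, ← ENNReal.ofReal_sub _ (by norm_num)]
          norm_num
        rw [h2, ← ENNReal.ofReal_inv_of_pos (by norm_num)]
        apply ENNReal.ofReal_le_ofReal
        norm_num
    _ = ENNReal.ofReal (V.toReal * 2^n * 2 * (r^2)⁻¹) := by
        rw [← ENNReal.ofReal_toReal hVfin]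
        rw [← ENNReal.ofReal_mul (by positivity), ← ENNReal.ofReal_mul (by positivity)]
        congr 1
        rw [ENNReal.toReal_ofReal ENNReal.toReal_nonneg]
        ring

theorem statement_2' (n : ℕ) (hn : 1 ≤ n) (Ω : Set (E n))
    (hΩo : IsOpen Ω) (hΩb : IsBounded Ω)
    (w : E n → ℝ) (hw : ContDiff ℝ (⊤ : ℕ∞) w) (hcc : Tendsto w (cocompact (E n)) atTop)
    (hΩeq : Ω = {x | w x < 0}) (hgrad : ∀ x, w x = 0 → fderiv ℝ w x ≠ 0)
    (c : ℝ) (hc : 0 < c) (χ : E n → ℝ) (hχ : ContDiff ℝ (⊤ : ℕ∞) χ)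
    (hχ01 : ∀ u, χ u ∈ Set.Icc (0:ℝ) 1) (hχ0 : ∀ u, ‖u‖ ≤ c → χ u = 0) :
    ∃ C : ℝ, ∀ hb ∈ Set.Ioc (0:ℝ) 1,
      (∫⁻ x : E n, ∫⁻ y : E n,
          ENNReal.ofReal
            (χ (hb⁻¹ • (x - y)) *
              (Set.indicator Ω (fun _ => (1:ℝ)) x * Set.indicator Ωᶜ (fun _ => (1:ℝ)) y)
              / ‖x - y‖ ^ (n + 2))) ≤ ENNReal.ofReal (C / hb) := by
  classical
  obtain ⟨K, hK0, hshell⟩ := shell_bound n hn Ω hΩo hΩb w hw hcc hΩeq hgrad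
  obtain ⟨A, hA0, hradial⟩ := radial_bound n hn
  refine ⟨5*A*K/c, fun hb hhb => ?_⟩
  obtain ⟨hb0, hb1⟩ := hhb
  have hchb : 0 < c * hb := by positivity
  set d : E n → ℝ := fun x => Metric.infDist x Ωᶜ with hd
  set r : E n → ℝ := fun x => max (c*hb) (d x) with hrdef
  have hrpos : ∀ x, 0 < r x := fun x => lt_of_lt_of_le hchb (le_max_left _ _)
  have hdcont : Continuous d := Metric.continuous_infDist_pt _
  -- Step A: pointwise bound on the integrand
  have stepA : ∀ x ∈ Ω, ∀ y : E n,
      ENNReal.ofReal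
        (χ (hb⁻¹ • (x - y)) *
          (Set.indicator Ω (fun _ => (1:ℝ)) x * Set.indicator Ωᶜ (fun _ => (1:ℝ)) y)
          / ‖x - y‖ ^ (n + 2)) ≤
      Set.indicator {y | r x ≤ dist x y}
        (fun y => ENNReal.ofReal ((‖x - y‖ ^ (n+2))⁻¹)) y := by
    intro x hx y
    by_cases hy : r x ≤ dist x y
    · have hymem : y ∈ {y | r x ≤ dist x y} := hy
      rw [Set.indicator_of_mem hymem]
      apply ENNReal.ofReal_le_ofReal
      have hnorm : 0 < ‖x - y‖ := by
        rw [← dist_eq_norm]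
        exact lt_of_lt_of_le (hrpos x) hy
      have hnum : χ (hb⁻¹ • (x - y)) *
          (Set.indicator Ω (fun _ => (1:ℝ)) x * Set.indicator Ωᶜ (fun _ => (1:ℝ)) y) ≤ 1 := by
        have h1 := (hχ01 (hb⁻¹ • (x - y))).2
        have h0 := (hχ01 (hb⁻¹ • (x - y))).1
        have hi1 : Set.indicator Ω (fun _ => (1:ℝ)) x ≤ 1 := Set.indicator_le_self' (by simp) x
        have hi0 : (0:ℝ) ≤ Set.indicator Ω (fun _ => (1:ℝ)) x :=
          Set.indicator_nonneg (by simp) x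
        have hj1 : Set.indicator Ωᶜ (fun _ => (1:ℝ)) y ≤ 1 := Set.indicator_le_self' (by simp) y
        have hj0 : (0:ℝ) ≤ Set.indicator Ωᶜ (fun _ => (1:ℝ)) y :=
          Set.indicator_nonneg (by simp) y
        exact mul_le_one₀ h1 (mul_nonneg hi0 hj0) (mul_le_one₀ hi1 hj0 hj1)
      have hnum0 : 0 ≤ χ (hb⁻¹ • (x - y)) *
          (Set.indicator Ω (fun _ => (1:ℝ)) x * Set.indicator Ωᶜ (fun _ => (1:ℝ)) y) := by
        have h0 := (hχ01 (hb⁻¹ • (x - y))).1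
        have hi0 : (0:ℝ) ≤ Set.indicator Ω (fun _ => (1:ℝ)) x :=
          Set.indicator_nonneg (by simp) x
        have hj0 : (0:ℝ) ≤ Set.indicator Ωᶜ (fun _ => (1:ℝ)) y :=
          Set.indicator_nonneg (by simp) y
        positivity
      calc χ (hb⁻¹ • (x - y)) *
            (Set.indicator Ω (fun _ => (1:ℝ)) x * Set.indicator Ωᶜ (fun _ => (1:ℝ)) y)
            / ‖x - y‖ ^ (n + 2)
          ≤ 1 / ‖x - y‖ ^ (n + 2) := by
            apply (div_le_div_iff_of_pos_right (by positivity : (0:ℝ) < ‖x - y‖ ^ (n+2))).2 hnum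
        _ = (‖x - y‖ ^ (n+2))⁻¹ := one_div _
    · have hynot : y ∉ {y | r x ≤ dist x y} := hy
      rw [Set.indicator_of_notMem hynot]
      rw [not_le, hrdef] at hy
      rcases lt_max_iff.1 hy with h | h
      · have hz : χ (hb⁻¹ • (x - y)) = 0 := by
          apply hχ0
          rw [norm_smul, norm_inv, Real.norm_eq_abs, abs_of_pos hb0]
          rw [← dist_eq_norm]
          rw [inv_mul_le_iff₀ hb0, mul_comm]
          exact h.le
        simp [hz]
      · have hyΩ : y ∉ Ωᶜ := by
          intro hyc
          exact absurd (Metric.infDist_le_dist_of_mem hyc) (not_le.2 h)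
        rw [Set.indicator_of_notMem hyΩ]
        simp
  -- Step B: bound inner integral by the radial bound
  set g : E n → ℝ≥0∞ :=
    Set.indicator Ω (fun x => ENNReal.ofReal (A * ((r x)^2)⁻¹)) with hg
  have claim1 : ∀ x : E n,
      (∫⁻ y : E n, ENNReal.ofReal
        (χ (hb⁻¹ • (x - y)) *
          (Set.indicator Ω (fun _ => (1:ℝ)) x * Set.indicator Ωᶜ (fun _ => (1:ℝ)) y)
          / ‖x - y‖ ^ (n + 2))) ≤ g x := by
    intro x
    by_cases hx : x ∈ Ω
    · have hgx : g x = ENNReal.ofReal (A * ((r x)^2)⁻¹) := Set.indicator_of_mem hx _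
      rw [hgx]
      have hmeas : MeasurableSet {y : E n | r x ≤ dist x y} :=
        measurableSet_le measurable_const (continuous_const.dist continuous_id).measurable
      calc (∫⁻ y : E n, ENNReal.ofReal
            (χ (hb⁻¹ • (x - y)) *
              (Set.indicator Ω (fun _ => (1:ℝ)) x * Set.indicator Ωᶜ (fun _ => (1:ℝ)) y)
              / ‖x - y‖ ^ (n + 2)))
          ≤ ∫⁻ y : E n, Set.indicator {y | r x ≤ dist x y}
              (fun y => ENNReal.ofReal ((‖x - y‖ ^ (n+2))⁻¹)) y :=
            lintegral_mono (stepA x hx)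
        _ = ∫⁻ y in {y | r x ≤ dist x y}, ENNReal.ofReal ((‖x - y‖ ^ (n+2))⁻¹) :=
            lintegral_indicator hmeas _
        _ ≤ ENNReal.ofReal (A * ((r x)^2)⁻¹) := hradial x (r x) (hrpos x)
    · have hgx : g x = 0 := Set.indicator_of_notMem hx _
      rw [hgx]
      have hzero : ∀ y : E n, ENNReal.ofReal
          (χ (hb⁻¹ • (x - y)) *
            (Set.indicator Ω (fun _ => (1:ℝ)) x * Set.indicator Ωᶜ (fun _ => (1:ℝ)) y)
            / ‖x - y‖ ^ (n + 2)) = 0 := by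
        intro y
        rw [Set.indicator_of_notMem hx]
        simp
      simp only [hzero]
      simp
  -- the dyadic pieces
  set P₀ : Set (E n) := {x | x ∈ Ω ∧ d x ≤ c*hb} with hP₀
  set Pk : ℕ → Set (E n) := fun k =>
    {x | x ∈ Ω ∧ d x ≤ 2^(k+1) * (c*hb)} ∩ {x | 2^k * (c*hb) ≤ d x} with hPk
  have hcover : Ω ⊆ P₀ ∪ ⋃ k, Pk k := by
    intro x hx
    by_cases hxd : d x ≤ c*hb
    · exact Or.inl ⟨hx, hxd⟩
    · push_neg at hxd
      right
      have hz : 1 ≤ d x / (c*hb) := by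
        rw [le_div_iff₀ hchb]
        linarith
      obtain ⟨k, hk1, hk2⟩ := dyadic_loc hz
      refine Set.mem_iUnion.2 ⟨k, ⟨hx, ?_⟩, ?_⟩
      · show d x ≤ 2^(k+1) * (c*hb)
        have h := mul_le_mul_of_nonneg_right hk2.le hchb.le
        rwa [div_mul_cancel₀ _ hchb.ne'] at h
      · show (2:ℝ)^k * (c*hb) ≤ d x
        have h := mul_le_mul_of_nonneg_right hk1 hchb.le
        rwa [div_mul_cancel₀ _ hchb.ne'] at h
  have hP₀meas : MeasurableSet P₀ :=
    hΩo.measurableSet.inter (measurableSet_le hdcont.measurable measurable_const)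
  have hPkmeas : ∀ k, MeasurableSet (Pk k) := fun k =>
    (hΩo.measurableSet.inter (measurableSet_le hdcont.measurable measurable_const)).inter
      (measurableSet_le measurable_const hdcont.measurable)
  -- integral over P₀
  have hint0 : ∫⁻ x in P₀, ENNReal.ofReal (A * ((r x)^2)⁻¹) ≤
      ENNReal.ofReal (A*K/(c*hb)) := by
    calc ∫⁻ x in P₀, ENNReal.ofReal (A * ((r x)^2)⁻¹)
        ≤ ∫⁻ _ in P₀, ENNReal.ofReal (A * ((c*hb)^2)⁻¹) := by
          apply setLIntegral_mono' hP₀meas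
          intro x _
          apply ENNReal.ofReal_le_ofReal
          apply mul_le_mul_of_nonneg_left _ hA0
          apply inv_anti₀ (by positivity)
          have : c*hb ≤ r x := le_max_left _ _
          nlinarith [hrpos x]
      _ = ENNReal.ofReal (A * ((c*hb)^2)⁻¹) * volume P₀ := setLIntegral_const _ _
      _ ≤ ENNReal.ofReal (A * ((c*hb)^2)⁻¹) * ENNReal.ofReal (K * (c*hb)) := by
          gcongr
          exact hshell (c*hb) hchb
      _ = ENNReal.ofReal (A * ((c*hb)^2)⁻¹ * (K * (c*hb))) := by
          rw [← ENNReal.ofReal_mul (by positivity)]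
      _ = ENNReal.ofReal (A*K/(c*hb)) := by
          congr 1
          field_simp
  -- integral over Pk
  have hintk : ∀ k : ℕ, ∫⁻ x in Pk k, ENNReal.ofReal (A * ((r x)^2)⁻¹) ≤
      ENNReal.ofReal (2*A*K/(c*hb)) * ENNReal.ofReal ((1/2:ℝ)^k) := by
    intro k
    have h2k : (0:ℝ) < 2^k * (c*hb) := by positivity
    calc ∫⁻ x in Pk k, ENNReal.ofReal (A * ((r x)^2)⁻¹)
        ≤ ∫⁻ _ in Pk k, ENNReal.ofReal (A * ((2^k * (c*hb))^2)⁻¹) := by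
          apply setLIntegral_mono' (hPkmeas k)
          intro x hx
          apply ENNReal.ofReal_le_ofReal
          apply mul_le_mul_of_nonneg_left _ hA0
          apply inv_anti₀ (by positivity)
          have h1 : 2^k * (c*hb) ≤ d x := hx.2
          have h2 : d x ≤ r x := le_max_right _ _
          nlinarith
      _ = ENNReal.ofReal (A * ((2^k * (c*hb))^2)⁻¹) * volume (Pk k) := setLIntegral_const _ _
      _ ≤ ENNReal.ofReal (A * ((2^k * (c*hb))^2)⁻¹) *
            ENNReal.ofReal (K * (2^(k+1) * (c*hb))) := by
          gcongr
          calc volume (Pk k) ≤ volume {x | x ∈ Ω ∧ Metric.infDist x Ωᶜ ≤ 2^(k+1) * (c*hb)} := by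
                apply measure_mono
                intro x hx
                exact ⟨hx.1.1, hx.1.2⟩
            _ ≤ ENNReal.ofReal (K * (2^(k+1) * (c*hb))) := hshell _ (by positivity)
      _ = ENNReal.ofReal (A * ((2^k * (c*hb))^2)⁻¹ * (K * (2^(k+1) * (c*hb)))) := by
          rw [← ENNReal.ofReal_mul (by positivity)]
      _ = ENNReal.ofReal (2*A*K/(c*hb) * (1/2:ℝ)^k) := by
          congr 1
          have h2 : ((2:ℝ)^k) ≠ 0 := by positivity
          rw [show ((1:ℝ)/2)^k = ((2:ℝ)^k)⁻¹ by rw [div_pow]; simp]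
          rw [pow_succ]
          field_simp
          ring
      _ = ENNReal.ofReal (2*A*K/(c*hb)) * ENNReal.ofReal ((1/2:ℝ)^k) := by
          rw [← ENNReal.ofReal_mul (by positivity)]
  have hAK : 0 ≤ A*K := mul_nonneg hA0 hK0
  calc (∫⁻ x : E n, ∫⁻ y : E n,
          ENNReal.ofReal
            (χ (hb⁻¹ • (x - y)) *
              (Set.indicator Ω (fun _ => (1:ℝ)) x * Set.indicator Ωᶜ (fun _ => (1:ℝ)) y)
              / ‖x - y‖ ^ (n + 2)))
      ≤ ∫⁻ x : E n, g x := lintegral_mono claim1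
    _ = ∫⁻ x in Ω, ENNReal.ofReal (A * ((r x)^2)⁻¹) := lintegral_indicator hΩo.measurableSet _
    _ ≤ ∫⁻ x in P₀ ∪ ⋃ k, Pk k, ENNReal.ofReal (A * ((r x)^2)⁻¹) := lintegral_mono_set hcover
    _ ≤ (∫⁻ x in P₀, ENNReal.ofReal (A * ((r x)^2)⁻¹)) +
          ∫⁻ x in ⋃ k, Pk k, ENNReal.ofReal (A * ((r x)^2)⁻¹) := lintegral_union_le _ _ _
    _ ≤ (∫⁻ x in P₀, ENNReal.ofReal (A * ((r x)^2)⁻¹)) +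
          ∑' k, ∫⁻ x in Pk k, ENNReal.ofReal (A * ((r x)^2)⁻¹) := by
        gcongr
        exact lintegral_iUnion_le _ _
    _ ≤ ENNReal.ofReal (A*K/(c*hb)) +
          ∑' k, ENNReal.ofReal (2*A*K/(c*hb)) * ENNReal.ofReal ((1/2:ℝ)^k) :=
        add_le_add hint0 (ENNReal.tsum_le_tsum hintk)
    _ = ENNReal.ofReal (A*K/(c*hb)) +
          ENNReal.ofReal (2*A*K/(c*hb)) * ∑' k, ENNReal.ofReal ((1/2:ℝ)^k) := by
        rw [ENNReal.tsum_mul_left]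
    _ = ENNReal.ofReal (A*K/(c*hb)) + ENNReal.ofReal (2*A*K/(c*hb)) * ENNReal.ofReal 2 := by
        congr 1
        have h1 : ∀ k : ℕ, ENNReal.ofReal ((1/2:ℝ)^k) = (ENNReal.ofReal (1/2:ℝ))^k := by
          intro k; rw [ENNReal.ofReal_pow (by norm_num)]
        simp_rw [h1]
        rw [ENNReal.tsum_geometric]
        have h2 : (1:ℝ≥0∞) - ENNReal.ofReal (1/2:ℝ) = ENNReal.ofReal (1/2:ℝ) := by
          rw [← ENNReal.ofReal_one, ← ENNReal.ofReal_sub _ (by norm_num)]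
          norm_num
        rw [h2, ← ENNReal.ofReal_inv_of_pos (by norm_num)]
        norm_num
    _ = ENNReal.ofReal (5*A*K/c/hb) := by
        rw [← ENNReal.ofReal_mul (by positivity),
          ← ENNReal.ofReal_add (by positivity) (by positivity)]
        congr 1
        field_simp
        ring


/-- for `Ω` bounded open with smooth boundary, `c > 0`, and `χ̄ : ℝⁿ → [0,1]`
smooth with `χ̄(u) = 0` for `|u| ≤ c`, there is `C` such that for every `ħ ∈ (0,1]`,
`∬ χ̄((x−y)/ħ) 1_Ω(x) 1_{Ω^c}(y) / |x−y|^{n+2} dx dy ≤ C/ħ`. -/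
theorem statement_2 (n : ℕ) (hn : 1 ≤ n) (Ω : Set (E n))
    (hΩo : IsOpen Ω) (hΩb : IsBounded Ω) (hΩs : HasSmoothBoundary Ω)
    (c : ℝ) (hc : 0 < c) (χ : E n → ℝ) (hχ : ContDiff ℝ (⊤ : ℕ∞) χ)
    (hχ01 : ∀ u, χ u ∈ Set.Icc (0:ℝ) 1) (hχ0 : ∀ u, ‖u‖ ≤ c → χ u = 0) :
    ∃ C : ℝ, ∀ hb ∈ Set.Ioc (0:ℝ) 1,
      (∫⁻ x : E n, ∫⁻ y : E n,
          ENNReal.ofReal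
            (χ (hb⁻¹ • (x - y)) *
              (Set.indicator Ω (fun _ => (1:ℝ)) x * Set.indicator Ωᶜ (fun _ => (1:ℝ)) y)
              / ‖x - y‖ ^ (n + 2))) ≤ ENNReal.ofReal (C / hb) := by
  obtain ⟨w, hw, hcc, hΩeq, hgrad⟩ := hΩs
  exact statement_2' n hn Ω hΩo hΩb w hw hcc hΩeq hgrad c hc χ hχ hχ01 hχ0
end
end

section
/- Let H be a complex Hilbert space, let P, Q : H → H be bounded self-adjoint projections, and set T := P∘Q − Q∘P. Suppose u ∈ H, u ≠ 0, λ ∈ ℝ, λ > 0, and P(Q(P u)) = λ u. Then: (i) P u = u; (ii) λ ≤ 1; (iii) T(T u) = −λ(1−λ) u, i.e. u is an eigenvector of −[P,Q]² with eigenvalue λ(1−λ); and (iv) if λ < 1 then T u ≠ 0. -/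
/-!
From `P Q P u = λ u` with `λ ≠ 0`, the vector `u` lies in the range of `P`, so `P Q u = λ u`.
Since `P Q` is a product of two contractions, its eigenvalue `λ` has modulus at most `1`.
Writing `[P, Q] u = λ u - Q u` and applying `[P, Q]` once more, the terms in `Q u` cancel
and leave `(λ² - λ) u`, which vanishes only for `λ ∈ {0, 1}`.
-/

namespace ContinuousLinearMap

theorem apply_eq_self_of_apply_eq_smul {K M : Type*} [Field K] [AddCommGroup M] [Module K M]
    [TopologicalSpace M] {P : M →L[K] M} (hP : IsIdempotentElem P) {c : K} (hc : c ≠ 0)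
    {x u : M} (h : P x = c • u) : P u = u := by
  have hPx : P (P x) = P x := congr($hP x)
  rw [h, map_smul] at hPx
  exact smul_right_injective M hc hPx

theorem norm_le_one_of_apply_eq_smul {𝕜 E : Type*} [NontriviallyNormedField 𝕜]
    [NormedAddCommGroup E] [NormedSpace 𝕜 E] {f : E →L[𝕜] E} (hf : ‖f‖ ≤ 1)
    {c : 𝕜} {u : E} (hu : u ≠ 0) (h : f u = c • u) : ‖c‖ ≤ 1 := by
  have hu' : 0 < ‖u‖ := norm_pos_iff.mpr hu
  have : ‖c‖ * ‖u‖ ≤ 1 * ‖u‖ := calc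
    ‖c‖ * ‖u‖ = ‖f u‖ := by rw [h, norm_smul]
    _ ≤ 1 * ‖u‖ := f.le_of_opNorm_le hf u
  exact le_of_mul_le_mul_right this hu'

theorem commutator_apply_commutator_apply {R M : Type*} [CommRing R] [AddCommGroup M]
    [Module R M] [TopologicalSpace M] [IsTopologicalAddGroup M] {P Q : M →L[R] M}
    (hQ : IsIdempotentElem Q) {c : R} {u : M} (hPu : P u = u) (hPQu : P (Q u) = c • u) :
    (P * Q - Q * P) ((P * Q - Q * P) u) = (c ^ 2 - c) • u := by
  have hQQ : ∀ x, Q (Q x) = Q x := fun x => congr($hQ x)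
  simp only [sub_apply, mul_apply_eq_comp, map_sub, map_smul, hPu, hPQu, hQQ]
  module

end ContinuousLinearMap

open ContinuousLinearMap

/-- for self-adjoint projections `P, Q` on a complex Hilbert space, with
`T := [P,Q]`, if `u ≠ 0`, `λ > 0` and `P Q P u = λ u`, then `P u = u`, `λ ≤ 1`,
`T² u = −λ(1−λ) u`, and `T u ≠ 0` whenever `λ < 1`. -/
theorem statement_9 {H : Type*} [NormedAddCommGroup H] [InnerProductSpace ℂ H]
    [CompleteSpace H] (P Q : H →L[ℂ] H)
    (hP2 : P * P = P) (hPsa : IsSelfAdjoint P)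
    (hQ2 : Q * Q = Q) (hQsa : IsSelfAdjoint Q)
    (u : H) (hu : u ≠ 0) (lam : ℝ) (hlam : 0 < lam)
    (heig : P (Q (P u)) = (lam : ℂ) • u) :
    P u = u ∧ lam ≤ 1 ∧
    (P * Q - Q * P) ((P * Q - Q * P) u) = ((-(lam * (1 - lam)) : ℝ) : ℂ) • u ∧
    (lam < 1 → (P * Q - Q * P) u ≠ 0) := by
  have hPu : P u = u :=
    apply_eq_self_of_apply_eq_smul hP2 (Complex.ofReal_ne_zero.mpr hlam.ne') heig
  have hPQu : P (Q u) = (lam : ℂ) • u := by rwa [hPu] at heig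
  have hPQ : ‖P * Q‖ ≤ 1 :=
    (norm_mul_le P Q).trans <| mul_le_one₀ (IsStarProjection.norm_le P ⟨hP2, hPsa⟩)
      (norm_nonneg Q) (IsStarProjection.norm_le Q ⟨hQ2, hQsa⟩)
  have hle : lam ≤ 1 := by
    have := norm_le_one_of_apply_eq_smul hPQ hu hPQu
    rw [Complex.norm_real, Real.norm_eq_abs] at this
    exact (le_abs_self lam).trans this
  have hT2 : (P * Q - Q * P) ((P * Q - Q * P) u) = ((-(lam * (1 - lam)) : ℝ) : ℂ) • u := by
    rw [commutator_apply_commutator_apply hQ2 hPu hPQu]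
    push_cast
    ring_nf
  refine ⟨hPu, hle, hT2, fun hlt hT => ?_⟩
  rw [hT, map_zero, eq_comm, smul_eq_zero, Complex.ofReal_eq_zero] at hT2
  have : lam * (1 - lam) ≠ 0 := mul_ne_zero hlam.ne' (sub_ne_zero.mpr hlt.ne')
  exact hT2.elim (fun h => this (neg_eq_zero.mp h)) hu
end

section
/- Let (λ_k)_{k∈ℕ} be a sequence of real numbers with λ_k ∈ (0,1] for every k. Define s : [0,1] → ℝ by s(λ) = −λ log λ − (1−λ) log(1−λ) for λ ∈ (0,1) and s(0) = s(1) = 0. Assume A := Σ_{k} λ_k(1−λ_k) satisfies 0 < A < ∞ and B := Σ_{k} √(λ_k(1−λ_k)) < ∞. Then the series Σ_k s(λ_k) converges and A ≤ Σ_k s(λ_k) ≤ 4 A log(B/A). -/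
noncomputable section

/-- The binary entropy function `s(λ) = −λ log λ − (1−λ) log(1−λ)`; with Lean's convention
`Real.log 0 = 0` this agrees with the continuous extension `s(0) = s(1) = 0`. -/
def binEnt (x : ℝ) : ℝ := -x * Real.log x - (1 - x) * Real.log (1 - x)

/-!
Write `t = λ(1 - λ)`. Pointwise, `2t ≤ s(λ) ≤ -2 t log t`: the lower bound is `log y ≤ y - 1`, and
the upper one is equivalent to `(a - b)(a log a - b log b) ≥ 0` for `a + b = 1`, which follows from
the concavity of `a log a - (1 - a) log (1 - a)` on `[1/2, 1]`, where it vanishes at both ends.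
Next, `log y ≤ y - 1` at `y = A / (B √t)` gives `-2 t log t ≤ 4 t log (B/A) + 4 (A/B) √t - 4 t`,
and after summing over `k` the last two terms cancel.
-/

open Real Set

lemma concaveOn_mul_log_sub_mul_log_one_sub :
    ConcaveOn ℝ (Icc (1 / 2) 1) fun a : ℝ => a * log a - (1 - a) * log (1 - a) := by
  have hcont : Continuous fun a : ℝ => a * log a := continuous_mul_log
  refine concaveOn_of_hasDerivWithinAt2_nonpos (convex_Icc _ _)
    (f' := fun a => log a + log (1 - a) + 2) (f'' := fun a => a⁻¹ - (1 - a)⁻¹)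
    (hcont.sub (hcont.comp (continuous_sub_left 1))).continuousOn ?_ ?_ ?_
  all_goals
    rw [interior_Icc]
    rintro a ⟨ha, ha1⟩
    have ha0 : a ≠ 0 := by linarith
    have ha1' : 1 - a ≠ 0 := by linarith
  · have h := (hasDerivAt_mul_log ha0).sub
      ((hasDerivAt_mul_log ha1').comp a ((hasDerivAt_id a).const_sub 1))
    exact (h.congr_deriv (by ring)).hasDerivWithinAt
  · have h := ((hasDerivAt_log ha0).add
      ((hasDerivAt_log ha1').comp a ((hasDerivAt_id a).const_sub 1))).add_const 2
    exact (h.congr_deriv (by ring)).hasDerivWithinAt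
  · simp only [sub_nonpos]
    exact inv_anti₀ (by linarith) (by linarith)

lemma one_sub_mul_log_one_sub_le_mul_log {a : ℝ} (ha : 1 / 2 ≤ a) (ha1 : a ≤ 1) :
    (1 - a) * log (1 - a) ≤ a * log a := by
  have h := concaveOn_mul_log_sub_mul_log_one_sub.ge_on_segment
    (left_mem_Icc.2 (by norm_num)) (right_mem_Icc.2 (by norm_num))
    (by rw [segment_eq_Icc (by norm_num)]; exact ⟨ha, ha1⟩)
  norm_num at h
  linarith

lemma binEnt_le_neg_two_mul_mul_log {x : ℝ} (hx : x ∈ Icc (0 : ℝ) 1) :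
    binEnt x ≤ -2 * (x * (1 - x)) * log (x * (1 - x)) := by
  obtain ⟨hx0, hx1⟩ := hx
  rcases hx0.eq_or_lt with rfl | hx0
  · simp [binEnt]
  rcases hx1.eq_or_lt with rfl | hx1
  · simp [binEnt]
  have hsign : 0 ≤ (x - (1 - x)) * (x * log x - (1 - x) * log (1 - x)) := by
    rcases le_total (1 / 2) x with h | h
    · exact mul_nonneg (by linarith) (sub_nonneg.2 (one_sub_mul_log_one_sub_le_mul_log h hx1.le))
    · have := one_sub_mul_log_one_sub_le_mul_log (a := 1 - x) (by linarith) (by linarith)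
      rw [sub_sub_cancel] at this
      exact mul_nonneg_of_nonpos_of_nonpos (by linarith) (by linarith)
  rw [log_mul hx0.ne' (by linarith), binEnt]
  linarith

lemma two_mul_mul_one_sub_le_binEnt {x : ℝ} (hx : x ∈ Icc (0 : ℝ) 1) :
    2 * (x * (1 - x)) ≤ binEnt x := by
  obtain ⟨hx0, hx1⟩ := hx
  have h1 : x * log x ≤ x * (x - 1) := by
    rcases hx0.eq_or_lt with rfl | hx0
    · simp
    exact mul_le_mul_of_nonneg_left (log_le_sub_one_of_pos hx0) hx0.le
  have h2 : (1 - x) * log (1 - x) ≤ (1 - x) * (1 - x - 1) := by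
    rcases hx1.eq_or_lt with rfl | hx1
    · simp
    exact mul_le_mul_of_nonneg_left (log_le_sub_one_of_pos (by linarith)) (by linarith)
  rw [binEnt]
  linarith

lemma neg_mul_log_le {t r : ℝ} (ht : 0 ≤ t) (hr : 0 < r) :
    -(t * log t) ≤ 2 * t * log r + 2 * (√t / r - t) := by
  rcases ht.eq_or_lt with rfl | ht
  · simp
  set u := √t
  have hu : 0 < u := sqrt_pos.2 ht
  have htu : t = u ^ 2 := (sq_sqrt ht.le).symm
  have hlog : log (1 / (r * u)) ≤ 1 / (r * u) - 1 := log_le_sub_one_of_pos (by positivity)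
  rw [one_div, log_inv, log_mul hr.ne' hu.ne'] at hlog
  have : u ^ 2 * (r * u)⁻¹ = u / r := by field_simp
  rw [htu, log_pow]
  push_cast
  nlinarith [mul_le_mul_of_nonneg_left hlog (sq_nonneg u)]

lemma binEnt_le_four_mul_mul_log_add {x r : ℝ} (hx : x ∈ Icc (0 : ℝ) 1) (hr : 0 < r) :
    binEnt x ≤ 4 * (x * (1 - x)) * log r + 4 * (√(x * (1 - x)) / r - x * (1 - x)) := by
  have ht : 0 ≤ x * (1 - x) := mul_nonneg hx.1 (sub_nonneg.2 hx.2)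
  linarith [binEnt_le_neg_two_mul_mul_log hx, neg_mul_log_le ht hr]

/-- if `λ_k ∈ (0,1]`, `A = Σ λ_k(1−λ_k)` satisfies `0 < A < ∞` and
`B = Σ √(λ_k(1−λ_k)) < ∞`, then `Σ s(λ_k)` converges and
`A ≤ Σ s(λ_k) ≤ 4 A log(B/A)`. -/
theorem statement_10 (lam : ℕ → ℝ) (hlam : ∀ k, lam k ∈ Set.Ioc (0:ℝ) 1)
    (hA : Summable fun k => lam k * (1 - lam k))
    (hApos : 0 < ∑' k, lam k * (1 - lam k))
    (hB : Summable fun k => Real.sqrt (lam k * (1 - lam k))) :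
    (Summable fun k => binEnt (lam k)) ∧
    (∑' k, lam k * (1 - lam k)) ≤ (∑' k, binEnt (lam k)) ∧
    (∑' k, binEnt (lam k)) ≤
      4 * (∑' k, lam k * (1 - lam k)) *
        Real.log ((∑' k, Real.sqrt (lam k * (1 - lam k))) / (∑' k, lam k * (1 - lam k))) := by
  have hlam' k : lam k ∈ Icc (0 : ℝ) 1 := Ioc_subset_Icc_self (hlam k)
  have hT0 k : 0 ≤ lam k * (1 - lam k) := mul_nonneg (hlam' k).1 (sub_nonneg.2 (hlam' k).2)
  set A := ∑' k, lam k * (1 - lam k)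
  set B := ∑' k, √(lam k * (1 - lam k))
  have hAB : A ≤ B := hA.tsum_le_tsum (fun k => le_sqrt_self_iff.2 <|
    mul_le_one₀ (hlam' k).2 (sub_nonneg.2 (hlam' k).2) (by linarith [(hlam' k).1])) hB
  have hr : 0 < B / A := div_pos (hApos.trans_le hAB) hApos
  have hlower k : lam k * (1 - lam k) ≤ binEnt (lam k) := by
    linarith [two_mul_mul_one_sub_le_binEnt (hlam' k), hT0 k]
  have hupper k := binEnt_le_four_mul_mul_log_add (hlam' k) hr
  have h₁ := hA.mul_left 4 |>.mul_right (log (B / A))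
  have h₂ := (hB.div_const (B / A)).sub hA |>.mul_left 4
  have hS : Summable fun k => binEnt (lam k) :=
    (h₁.add h₂).of_nonneg_of_le (fun k => (hT0 k).trans (hlower k)) hupper
  refine ⟨hS, hA.tsum_le_tsum hlower hS, ?_⟩
  calc ∑' k, binEnt (lam k) ≤ _ := hS.tsum_le_tsum hupper (h₁.add h₂)
    _ = 4 * A * log (B / A) + 4 * (B / (B / A) - A) := by
      rw [h₁.tsum_add h₂, tsum_mul_right, tsum_mul_left, tsum_mul_left,
        ((hB.div_const _).tsum_sub hA), tsum_div_const]
    _ = 4 * A * log (B / A) := by rw [div_div_cancel₀ (hApos.trans_le hAB).ne']; ring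
end
end
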